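/- arXiv:1709.02790 — 13 statements merged into one kernel-verified Lean document; each statement's English description precedes it below -/
import Mathlib

section
/- Let G be a connected simple graph on vertex set {0,…,N−1} with Laplacian matrix L, and let M be a pseudoinverse of L (M symmetric, M·𝟙 = 0, and L·M = I − (1/N)·J). Then for all vertices j, k one has d_B²(j,k) = ‖M e_j − M e_k‖² (Euclidean norm, where e_j is the j-th standard basis vector), and the function d_B(j,k) = √(d_B²(j,k)) is a metric on the vertex set: it is nonnegative, it vanishes if and only if j = k, it is symmetric, and it satisfies the triangle inequality d_B(j,r) + d_B(r,k) ≥ d_B(j,k) for all vertices j, r, k. -/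
/-!
For symmetric `M`, `d_B²(j, k)` expands to `‖M e_j - M e_k‖²`, so `d_B` is the Euclidean distance
pulled back along the column map `j ↦ M e_j`. That map is injective because `L M e_j = e_j - 𝟙 / N`
are pairwise distinct, so the pullback is a metric rather than only a pseudometric.
-/

open Matrix Finset

/-- Squared biharmonic distance between vertices `j` and `k`, in terms of a
pseudoinverse `M` of the graph Laplacian. -/
noncomputable def biharmSq {N : ℕ} (M : Matrix (Fin N) (Fin N) ℝ) (j k : Fin N) : ℝ :=
  (M * M) j j + (M * M) k k - 2 * (M * M) j k

/-- Biharmonic distance. -/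
noncomputable def biharm {N : ℕ} (M : Matrix (Fin N) (Fin N) ℝ) (j k : Fin N) : ℝ :=
  Real.sqrt (biharmSq M j k)

namespace Matrix

variable {l m n R : Type*}

theorem col_injective_of_col_mul_injective [Fintype m] [NonUnitalNonAssocSemiring R]
    {A : Matrix l m R} {M : Matrix m n R} (h : Function.Injective (A * M).col) :
    Function.Injective M.col :=
  Function.Injective.of_comp (f := (A *ᵥ ·)) h

theorem col_injective_one_sub_smul_ones [DecidableEq n] [Ring R] [Nontrivial R] (c : R) :
    Function.Injective (1 - c • of fun _ _ => (1 : R) : Matrix n n R).col := by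
  intro j k hjk
  by_contra hne
  have hdiag := congrFun hjk j
  simp [col_apply, hne] at hdiag

end Matrix

section Biharmonic

variable {N : ℕ} {M : Matrix (Fin N) (Fin N) ℝ}

theorem biharmSq_eq_sum_sq_sub (hM : M.IsSymm) (j k : Fin N) :
    biharmSq M j k = ∑ i, (M i j - M i k) ^ 2 := by
  have hMM : ∀ a b, (M * M) a b = ∑ i, M i a * M i b := fun a b => by
    rw [mul_apply]
    exact sum_congr rfl fun i _ => by rw [hM.apply a i]
  simp only [biharmSq, hMM, sub_sq, sum_add_distrib, sum_sub_distrib, mul_sum]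
  ring_nf

theorem biharm_eq_dist_col (hM : M.IsSymm) (j k : Fin N) :
    biharm M j k =
      dist (WithLp.toLp 2 (M.col j) : EuclideanSpace ℝ (Fin N)) (WithLp.toLp 2 (M.col k)) := by
  simp only [biharm, biharmSq_eq_sum_sq_sub hM, EuclideanSpace.dist_eq, Real.dist_eq, sq_abs]
  rfl

end Biharmonic

theorem biharmonic_is_metric_general (N : ℕ)
    (L M : Matrix (Fin N) (Fin N) ℝ)
    (hMsymm : M.IsSymm)
    (hLM : L * M = 1 - (N : ℝ)⁻¹ • Matrix.of (fun _ _ => (1 : ℝ))) :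
    (∀ j k : Fin N,
      biharmSq M j k
        = ∑ i, (M.mulVec (Pi.single j 1) i - M.mulVec (Pi.single k 1) i) ^ 2) ∧
    (∀ j k : Fin N, 0 ≤ biharm M j k) ∧
    (∀ j k : Fin N, biharm M j k = 0 ↔ j = k) ∧
    (∀ j k : Fin N, biharm M j k = biharm M k j) ∧
    (∀ j r k : Fin N, biharm M j k ≤ biharm M j r + biharm M r k) := by
  set e : Fin N → EuclideanSpace ℝ (Fin N) := fun j => WithLp.toLp 2 (M.col j)
  have hdist : ∀ j k, biharm M j k = dist (e j) (e k) := biharm_eq_dist_col hMsymm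
  have he : Function.Injective e := (WithLp.toLp_injective 2).comp <|
    col_injective_of_col_mul_injective (hLM ▸ col_injective_one_sub_smul_ones _)
  refine ⟨fun j k => ?_, fun j k => ?_, fun j k => ?_, fun j k => ?_, fun j r k => ?_⟩
  · simp only [biharmSq_eq_sum_sq_sub hMsymm, mulVec_single_one, col_apply]
  · exact hdist j k ▸ dist_nonneg
  · rw [hdist, dist_eq_zero, he.eq_iff]
  · rw [hdist, hdist, dist_comm]
  · simpa only [hdist] using dist_triangle (e j) (e r) (e k)

theorem biharmonic_is_metric (N : ℕ) (hN : 0 < N)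
    (G : SimpleGraph (Fin N)) [DecidableRel G.Adj] (hG : G.Connected)
    (L M : Matrix (Fin N) (Fin N) ℝ)
    (hL : L = G.lapMatrix ℝ)
    (hMsymm : M.IsSymm)
    (hM1 : M.mulVec (fun _ => (1 : ℝ)) = 0)
    (hLM : L * M = 1 - (N : ℝ)⁻¹ • Matrix.of (fun _ _ => (1 : ℝ))) :
    (∀ j k : Fin N,
      biharmSq M j k
        = ∑ i, (M.mulVec (Pi.single j 1) i - M.mulVec (Pi.single k 1) i) ^ 2) ∧
    (∀ j k : Fin N, 0 ≤ biharm M j k) ∧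
    (∀ j k : Fin N, biharm M j k = 0 ↔ j = k) ∧
    (∀ j k : Fin N, biharm M j k = biharm M k j) ∧
    (∀ j r k : Fin N, biharm M j k ≤ biharm M j r + biharm M r k) :=
  biharmonic_is_metric_general N L M hMsymm hLM
end

section
/- Let λ > 0 and c be real numbers, let P be the 2×2 real matrix P = [[0, 1], [−λ, −λ]], and let Z = [[c, 0], [0, 0]]. If Θ is any 2×2 real matrix satisfying the Lyapunov equation Pᵀ·Θ + Θ·P + Z = 0, then the (2,2) entry of Θ equals c/(2λ²). -/
/-!
Write `s = Θ₀₁ + Θ₁₀`. For the companion matrix `P = !![0, 1; -a, -b]`, the `(0,0)` entry of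
`Pᵀ Θ + Θ P + Z` is `Z₀₀ - a s` and its `(1,1)` entry is `s - 2 b Θ₁₁ + Z₁₁`. With
`Z = !![c, 0; 0, 0]` these give `c = a s = 2 a b Θ₁₁`, whatever the other entries of `Θ` are.
-/

open Matrix

namespace Matrix

variable {R : Type*} [CommRing R]

theorem companion_lyapunov_apply_zero_zero (a b : R) (Θ Z : Matrix (Fin 2) (Fin 2) R) :
    ((!![0, 1; -a, -b])ᵀ * Θ + Θ * !![0, 1; -a, -b] + Z) 0 0 =
      Z 0 0 - a * (Θ 0 1 + Θ 1 0) := by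
  simp only [add_apply, mul_apply, transpose_apply, Fin.sum_univ_two, of_apply, cons_val',
    cons_val_zero, cons_val_one, cons_val_fin_one]
  ring

theorem companion_lyapunov_apply_one_one (a b : R) (Θ Z : Matrix (Fin 2) (Fin 2) R) :
    ((!![0, 1; -a, -b])ᵀ * Θ + Θ * !![0, 1; -a, -b] + Z) 1 1 =
      Θ 0 1 + Θ 1 0 - 2 * b * Θ 1 1 + Z 1 1 := by
  simp only [add_apply, mul_apply, transpose_apply, Fin.sum_univ_two, of_apply, cons_val',
    cons_val_zero, cons_val_one, cons_val_fin_one]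
  ring

theorem two_mul_mul_apply_one_one_of_companion_lyapunov {a b c : R}
    {Θ : Matrix (Fin 2) (Fin 2) R}
    (h : (!![0, 1; -a, -b])ᵀ * Θ + Θ * !![0, 1; -a, -b] + !![c, 0; 0, 0] = 0) :
    2 * a * b * Θ 1 1 = c := by
  have h₀₀ := companion_lyapunov_apply_zero_zero a b Θ !![c, 0; 0, 0]
  have h₁₁ := companion_lyapunov_apply_one_one a b Θ !![c, 0; 0, 0]
  rw [h] at h₀₀ h₁₁
  simp only [zero_apply, of_apply, cons_val', cons_val_zero, cons_val_one, empty_val',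
    cons_val_fin_one] at h₀₀ h₁₁
  linear_combination h₀₀ + a * h₁₁

end Matrix

theorem lyapunov_2x2_entry (l c : ℝ) (hl : 0 < l)
    (P Z Θ : Matrix (Fin 2) (Fin 2) ℝ)
    (hP : P = !![0, 1; -l, -l])
    (hZ : Z = !![c, 0; 0, 0])
    (hLyap : Pᵀ * Θ + Θ * P + Z = 0) :
    Θ 1 1 = c / (2 * l ^ 2) := by
  subst hP hZ
  have hΘ := two_mul_mul_apply_one_one_of_companion_lyapunov hLyap
  rw [eq_div_iff (by positivity), ← hΘ]
  ring
end

section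
/- Let N ≥ 2, let λ : {1,…,N−1} → ℝ be positive reals, and let Q be an (N−1)×N real matrix with Q·Qᵀ = I. Fix vertices j, k ∈ {0,…,N−1} and set q = Q·(e_j − e_k) ∈ ℝ^{N−1}. Let D = diag(λ₁,…,λ_{N−1}), let M be the 2(N−1)×2(N−1) block matrix M = [[0, I], [−D, −D]], let Z be the block matrix Z = [[q·qᵀ, 0], [0, 0]], and let B be the 2(N−1)×N block matrix B = [[0], [Q]]. If Σ is any 2(N−1)×2(N−1) real matrix satisfying the Lyapunov equation Mᵀ·Σ + Σ·M + Z = 0, then trace(Bᵀ·Σ·B) = Σ_{i=1}^{N−1} (Q_{ij} − Q_{ik})²/(2λ_i²). -/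
/-!
Since `Q Qᵀ = I`, cycling the trace turns `tr (Bᵀ S B)` into `tr (B Bᵀ S) = tr S₂₂`, so only the
diagonal of the lower-right block of `S` matters. Because `D` is diagonal, each `(S₂₂)ᵢᵢ` is pinned
down by just two scalar entries of the Lyapunov equation, without solving it.
-/

open Matrix Finset

namespace Matrix

variable {R l m n : Type*}

theorem mulVec_single_sub_single [Ring R] [Fintype n] [DecidableEq n]
    (A : Matrix m n R) (j k : n) :
    A *ᵥ (Pi.single j 1 - Pi.single k 1) = fun i => A i j - A i k := by
  ext i
  simp [mulVec_sub]

theorem fromRows_zero_mul_transpose_self [Semiring R] [Fintype m] (A : Matrix n m R) :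
    fromRows (0 : Matrix l m R) A * (fromRows (0 : Matrix l m R) A)ᵀ
      = fromBlocks 0 0 0 (A * Aᵀ) := by
  rw [transpose_fromRows, fromRows_mul_fromCols]
  simp

theorem trace_fromBlocks_zero_zero_zero_mul [Semiring R] [Fintype m] [Fintype n]
    (S : Matrix (m ⊕ n) (m ⊕ n) R) (C : Matrix n n R) :
    (fromBlocks 0 0 0 C * S).trace = (C * S.toBlocks₂₂).trace := by
  conv_lhs => rw [← fromBlocks_toBlocks S, fromBlocks_multiply]
  simp [trace, Fintype.sum_sum_type]

/-- The `(i, i)` entries of the two diagonal blocks of the Lyapunov equation read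
`q_i² = d_i (S₁₂ + S₂₁)ᵢᵢ` and `(S₁₂ + S₂₁)ᵢᵢ = 2 d_i (S₂₂)ᵢᵢ`. -/
theorem two_mul_sq_mul_apply_inr_of_lyapunov [CommRing R] [Fintype n] [DecidableEq n]
    (d q : n → R) (S : Matrix (n ⊕ n) (n ⊕ n) R)
    (hS : (fromBlocks 0 1 (-diagonal d) (-diagonal d))ᵀ * S
        + S * fromBlocks 0 1 (-diagonal d) (-diagonal d) + fromBlocks (vecMulVec q q) 0 0 0 = 0)
    (i : n) :
    2 * d i ^ 2 * S (.inr i) (.inr i) = q i ^ 2 := by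
  have h₁₁ := congrFun (congrFun hS (.inl i)) (.inl i)
  have h₂₂ := congrFun (congrFun hS (.inr i)) (.inr i)
  simp [mul_apply, Fintype.sum_sum_type, diagonal_apply, one_apply, vecMulVec_apply] at h₁₁ h₂₂
  linear_combination -d i * h₂₂ - h₁₁

end Matrix

theorem h2_norm_pairwise_variance_general (N : ℕ)
    (lam : Fin (N - 1) → ℝ) (hlam : ∀ i, 0 < lam i)
    (Q : Matrix (Fin (N - 1)) (Fin N) ℝ) (hQ : Q * Qᵀ = 1)
    (j k : Fin N)
    (q : Fin (N - 1) → ℝ)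
    (hq : q = Q.mulVec (Pi.single j 1 - Pi.single k 1))
    (M Z S : Matrix (Fin (N - 1) ⊕ Fin (N - 1)) (Fin (N - 1) ⊕ Fin (N - 1)) ℝ)
    (hM : M = Matrix.fromBlocks 0 1 (-(Matrix.diagonal lam)) (-(Matrix.diagonal lam)))
    (hZ : Z = Matrix.fromBlocks (Matrix.vecMulVec q q) 0 0 0)
    (B : Matrix (Fin (N - 1) ⊕ Fin (N - 1)) (Fin N) ℝ)
    (hB : B = Matrix.fromRows 0 Q)
    (hLyap : Mᵀ * S + S * M + Z = 0) :
    (Bᵀ * S * B).trace = ∑ i, (Q i j - Q i k) ^ 2 / (2 * lam i ^ 2) := by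
  subst hM hZ hB
  rw [trace_mul_cycle, fromRows_zero_mul_transpose_self, hQ, trace_fromBlocks_zero_zero_zero_mul,
    Matrix.one_mul]
  refine sum_congr rfl fun i _ => ?_
  show S (.inr i) (.inr i) = _
  rw [eq_div_iff (mul_pos two_pos (pow_pos (hlam i) 2)).ne', mul_comm,
    two_mul_sq_mul_apply_inr_of_lyapunov lam q S hLyap, hq, mulVec_single_sub_single]

theorem h2_norm_pairwise_variance (N : ℕ) (hN : 2 ≤ N)
    (lam : Fin (N - 1) → ℝ) (hlam : ∀ i, 0 < lam i)
    (Q : Matrix (Fin (N - 1)) (Fin N) ℝ) (hQ : Q * Qᵀ = 1)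
    (j k : Fin N)
    (q : Fin (N - 1) → ℝ)
    (hq : q = Q.mulVec (Pi.single j 1 - Pi.single k 1))
    (M Z S : Matrix (Fin (N - 1) ⊕ Fin (N - 1)) (Fin (N - 1) ⊕ Fin (N - 1)) ℝ)
    (hM : M = Matrix.fromBlocks 0 1 (-(Matrix.diagonal lam)) (-(Matrix.diagonal lam)))
    (hZ : Z = Matrix.fromBlocks (Matrix.vecMulVec q q) 0 0 0)
    (B : Matrix (Fin (N - 1) ⊕ Fin (N - 1)) (Fin N) ℝ)
    (hB : B = Matrix.fromRows 0 Q)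
    (hLyap : Mᵀ * S + S * M + Z = 0) :
    (Bᵀ * S * B).trace = ∑ i, (Q i j - Q i k) ^ 2 / (2 * lam i ^ 2) :=
  h2_norm_pairwise_variance_general N lam hlam Q hQ j k q hq M Z S hM hZ B hB hLyap
end

section
/- Let N ≥ 2, let λ : {1,…,N−1} → ℝ be positive reals, and let Q be an (N−1)×N real matrix with Q·Qᵀ = I. Fix a vertex j ∈ {0,…,N−1} and set q = Q·e_j ∈ ℝ^{N−1}. Let D = diag(λ₁,…,λ_{N−1}), let M be the 2(N−1)×2(N−1) block matrix M = [[0, I], [−D, −D]], let Z be the block matrix Z = [[q·qᵀ, 0], [0, 0]], and let B be the 2(N−1)×N block matrix B = [[0], [Q]]. If Σ is any 2(N−1)×2(N−1) real matrix satisfying the Lyapunov equation Mᵀ·Σ + Σ·M + Z = 0, then trace(Bᵀ·Σ·B) = Σ_{i=1}^{N−1} Q_{ij}²/(2λ_i²). -/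
/-!
Only the lower-right block `S₂₂` of `S` is seen: `B Bᵀ = diag(0, Q Qᵀ) = diag(0, I)`, so
`trace (Bᵀ S B) = trace (S B Bᵀ) = trace S₂₂`. Its diagonal is pinned down by two diagonal entries
of the Lyapunov equation: entry `(inl i, inl i)` gives `λᵢ (S₁₂ + S₂₁)ᵢᵢ = qᵢ²` and entry
`(inr i, inr i)` gives `(S₁₂ + S₂₁)ᵢᵢ = 2 λᵢ (S₂₂)ᵢᵢ`, hence `(S₂₂)ᵢᵢ = qᵢ² / (2 λᵢ²)` with
`qᵢ = Q i j`.
-/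

open Matrix Finset

theorem Matrix.trace_fromBlocks {m n R : Type*} [Fintype m] [Fintype n] [AddCommMonoid R]
    (A : Matrix m m R) (B : Matrix m n R) (C : Matrix n m R) (D : Matrix n n R) :
    (fromBlocks A B C D).trace = A.trace + D.trace := by
  simp [trace, Fintype.sum_sum_type]

theorem Matrix.trace_transpose_fromRows_zero_mul_mul {m n p R : Type*} [Fintype m] [Fintype n]
    [Fintype p] [CommRing R] (Q : Matrix m p R) (S : Matrix (n ⊕ m) (n ⊕ m) R) :
    ((fromRows (0 : Matrix n p R) Q)ᵀ * S * fromRows (0 : Matrix n p R) Q).trace =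
      (Q * Qᵀ * S.toBlocks₂₂).trace := by
  rw [trace_mul_cycle, transpose_fromRows, fromRows_mul_fromCols, ← fromBlocks_toBlocks S,
    fromBlocks_multiply]
  simp [trace_fromBlocks]

theorem two_mul_sq_mul_apply_inr_inr_of_lyapunov {n R : Type*} [Fintype n] [DecidableEq n]
    [CommRing R] {lam : n → R} {W : Matrix n n R} {S : Matrix (n ⊕ n) (n ⊕ n) R}
    (h : (fromBlocks 0 1 (-diagonal lam) (-diagonal lam))ᵀ * S
      + S * fromBlocks 0 1 (-diagonal lam) (-diagonal lam) + fromBlocks W 0 0 0 = 0) (i : n) :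
    2 * lam i ^ 2 * S (.inr i) (.inr i) = W i i := by
  have h₁ := congr_fun₂ h (.inl i) (.inl i)
  have h₂ := congr_fun₂ h (.inr i) (.inr i)
  simp only [diagonal_neg, Matrix.add_apply, mul_apply, transpose_apply, Fintype.sum_sum_type,
    fromBlocks_apply₁₁, fromBlocks_apply₁₂, fromBlocks_apply₂₁, fromBlocks_apply₂₂,
    Matrix.zero_apply, diagonal_apply, one_apply, zero_mul, mul_zero, ite_mul, mul_ite, neg_mul, mul_neg, one_mul,
    mul_one, sum_const_zero, sum_ite_eq', mem_univ, ↓reduceIte, zero_add, add_zero] at h₁ h₂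
  linear_combination -h₁ - lam i * h₂

theorem h2_norm_vertex_variance_general (N : ℕ)
    (lam : Fin (N - 1) → ℝ) (hlam : ∀ i, 0 < lam i)
    (Q : Matrix (Fin (N - 1)) (Fin N) ℝ) (hQ : Q * Qᵀ = 1)
    (j : Fin N)
    (q : Fin (N - 1) → ℝ)
    (hq : q = Q.mulVec (Pi.single j 1))
    (M Z S : Matrix (Fin (N - 1) ⊕ Fin (N - 1)) (Fin (N - 1) ⊕ Fin (N - 1)) ℝ)
    (hM : M = Matrix.fromBlocks 0 1 (-(Matrix.diagonal lam)) (-(Matrix.diagonal lam)))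
    (hZ : Z = Matrix.fromBlocks (Matrix.vecMulVec q q) 0 0 0)
    (B : Matrix (Fin (N - 1) ⊕ Fin (N - 1)) (Fin N) ℝ)
    (hB : B = Matrix.fromRows 0 Q)
    (hLyap : Mᵀ * S + S * M + Z = 0) :
    (Bᵀ * S * B).trace = ∑ i, (Q i j) ^ 2 / (2 * lam i ^ 2) := by
  subst hM hZ hB hq
  rw [trace_transpose_fromRows_zero_mul_mul, hQ, one_mul, trace]
  refine sum_congr rfl fun i _ => ?_
  have hS := two_mul_sq_mul_apply_inr_inr_of_lyapunov hLyap i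
  rw [vecMulVec_apply, mulVec_single_one, col_apply, ← sq] at hS
  rw [← hS, diag_apply, toBlocks₂₂, of_apply, mul_div_cancel_left₀]
  exact mul_ne_zero two_ne_zero (pow_ne_zero 2 (hlam i).ne')

theorem h2_norm_vertex_variance (N : ℕ) (hN : 2 ≤ N)
    (lam : Fin (N - 1) → ℝ) (hlam : ∀ i, 0 < lam i)
    (Q : Matrix (Fin (N - 1)) (Fin N) ℝ) (hQ : Q * Qᵀ = 1)
    (j : Fin N)
    (q : Fin (N - 1) → ℝ)
    (hq : q = Q.mulVec (Pi.single j 1))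
    (M Z S : Matrix (Fin (N - 1) ⊕ Fin (N - 1)) (Fin (N - 1) ⊕ Fin (N - 1)) ℝ)
    (hM : M = Matrix.fromBlocks 0 1 (-(Matrix.diagonal lam)) (-(Matrix.diagonal lam)))
    (hZ : Z = Matrix.fromBlocks (Matrix.vecMulVec q q) 0 0 0)
    (B : Matrix (Fin (N - 1) ⊕ Fin (N - 1)) (Fin N) ℝ)
    (hB : B = Matrix.fromRows 0 Q)
    (hLyap : Mᵀ * S + S * M + Z = 0) :
    (Bᵀ * S * B).trace = ∑ i, (Q i j) ^ 2 / (2 * lam i ^ 2) :=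
  h2_norm_vertex_variance_general N lam hlam Q hQ j q hq M Z S hM hZ B hB hLyap
end

section
/- Let m ≥ 1 and let λ : {1,…,m} → ℝ be positive reals. Let D = diag(λ₁,…,λ_m), let M be the 2m×2m block matrix M = [[0, I], [−D, −D]], and let Z be the block matrix Z = [[I, 0], [0, 0]]. If Σ is any 2m×2m real matrix satisfying the Lyapunov equation Mᵀ·Σ + Σ·M + Z = 0, then the trace of the lower-right m×m block of Σ equals Σ_{i=1}^{m} 1/(2λ_i²). -/
/-!
Write `S = [[A, B], [C, D]]` and `Λ = diag λ`. The upper-left block of the Lyapunov equation reads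
`Λ C + B Λ = I` and the lower-right one `B + C = Λ D + D Λ`. On the diagonal these give
`λᵢ (Bᵢᵢ + Cᵢᵢ) = 1` and `Bᵢᵢ + Cᵢᵢ = 2 λᵢ Dᵢᵢ`, hence `2 λᵢ² Dᵢᵢ = 1`.
-/

open Matrix Finset

namespace Matrix

variable {R : Type*} {n : Type*} [Fintype n] [DecidableEq n]

def secondOrderConsensus [Ring R] (lam : n → R) : Matrix (n ⊕ n) (n ⊕ n) R :=
  fromBlocks 0 1 (-diagonal lam) (-diagonal lam)

section Ring

variable [Ring R] (lam : n → R) (S : Matrix (n ⊕ n) (n ⊕ n) R)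

theorem secondOrderConsensus_lyapunov_toBlocks₁₁ :
    ((secondOrderConsensus lam)ᵀ * S + S * secondOrderConsensus lam +
        fromBlocks 1 0 0 0).toBlocks₁₁ =
      1 - diagonal lam * S.toBlocks₂₁ - S.toBlocks₁₂ * diagonal lam := by
  rw [← fromBlocks_toBlocks S, secondOrderConsensus, fromBlocks_transpose, fromBlocks_multiply,
    fromBlocks_multiply, fromBlocks_add, fromBlocks_add, toBlocks_fromBlocks₁₁]
  simp only [toBlocks_fromBlocks₂₁, toBlocks_fromBlocks₁₂, diagonal_transpose, transpose_neg,
    transpose_zero, zero_mul, mul_zero, neg_mul, mul_neg]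
  abel

theorem secondOrderConsensus_lyapunov_toBlocks₂₂ :
    ((secondOrderConsensus lam)ᵀ * S + S * secondOrderConsensus lam +
        fromBlocks 1 0 0 0).toBlocks₂₂ =
      S.toBlocks₁₂ + S.toBlocks₂₁ - diagonal lam * S.toBlocks₂₂ - S.toBlocks₂₂ * diagonal lam := by
  rw [← fromBlocks_toBlocks S, secondOrderConsensus, fromBlocks_transpose, fromBlocks_multiply,
    fromBlocks_multiply, fromBlocks_add, fromBlocks_add, toBlocks_fromBlocks₂₂]
  simp only [toBlocks_fromBlocks₁₂, toBlocks_fromBlocks₂₁, toBlocks_fromBlocks₂₂,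
    diagonal_transpose, transpose_neg, transpose_one, one_mul, mul_one, neg_mul, mul_neg]
  abel

end Ring

theorem two_mul_sq_mul_toBlocks₂₂_of_secondOrderConsensus_lyapunov [CommRing R] (lam : n → R)
    (S : Matrix (n ⊕ n) (n ⊕ n) R)
    (hS : (secondOrderConsensus lam)ᵀ * S + S * secondOrderConsensus lam +
      fromBlocks 1 0 0 0 = 0) (i : n) :
    2 * lam i ^ 2 * S.toBlocks₂₂ i i = 1 := by
  have h₁₁ : (1 - diagonal lam * S.toBlocks₂₁ - S.toBlocks₁₂ * diagonal lam) i i = 0 := by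
    rw [← secondOrderConsensus_lyapunov_toBlocks₁₁, hS]; rfl
  have h₂₂ : (S.toBlocks₁₂ + S.toBlocks₂₁ - diagonal lam * S.toBlocks₂₂ -
      S.toBlocks₂₂ * diagonal lam) i i = 0 := by
    rw [← secondOrderConsensus_lyapunov_toBlocks₂₂, hS]; rfl
  simp only [sub_apply, add_apply, one_apply_eq, diagonal_mul, mul_diagonal] at h₁₁ h₂₂
  linear_combination (-lam i) * h₂₂ - h₁₁

theorem trace_toBlocks₂₂_of_secondOrderConsensus_lyapunov [Field R] (lam : n → R)
    (S : Matrix (n ⊕ n) (n ⊕ n) R)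
    (hS : (secondOrderConsensus lam)ᵀ * S + S * secondOrderConsensus lam +
      fromBlocks 1 0 0 0 = 0) :
    S.toBlocks₂₂.trace = ∑ i, 1 / (2 * lam i ^ 2) :=
  Finset.sum_congr rfl fun i _ ↦
    eq_one_div_of_mul_eq_one_right <|
      two_mul_sq_mul_toBlocks₂₂_of_secondOrderConsensus_lyapunov lam S hS i

end Matrix

theorem h2_norm_total_variance_general (m : ℕ)
    (lam : Fin m → ℝ)
    (M Z S : Matrix (Fin m ⊕ Fin m) (Fin m ⊕ Fin m) ℝ)
    (hM : M = Matrix.fromBlocks 0 1 (-(Matrix.diagonal lam)) (-(Matrix.diagonal lam)))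
    (hZ : Z = Matrix.fromBlocks 1 0 0 0)
    (hLyap : Mᵀ * S + S * M + Z = 0) :
    (S.toBlocks₂₂).trace = ∑ i, 1 / (2 * lam i ^ 2) := by
  subst hM hZ
  exact trace_toBlocks₂₂_of_secondOrderConsensus_lyapunov lam S hLyap

theorem h2_norm_total_variance (m : ℕ) (hm : 1 ≤ m)
    (lam : Fin m → ℝ) (hlam : ∀ i, 0 < lam i)
    (M Z S : Matrix (Fin m ⊕ Fin m) (Fin m ⊕ Fin m) ℝ)
    (hM : M = Matrix.fromBlocks 0 1 (-(Matrix.diagonal lam)) (-(Matrix.diagonal lam)))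
    (hZ : Z = Matrix.fromBlocks 1 0 0 0)
    (hLyap : Mᵀ * S + S * M + Z = 0) :
    (S.toBlocks₂₂).trace = ∑ i, 1 / (2 * lam i ^ 2) :=
  h2_norm_total_variance_general m lam M Z S hM hZ hLyap
end

section
/- Let N ≥ 2 and let G be the complete graph on vertex set {0,…,N−1} (every two distinct vertices are adjacent), with Laplacian matrix L. Let M be a pseudoinverse of L (M symmetric, M·𝟙 = 0, and L·M = I − (1/N)·J). Then for all vertices j ≠ k, the squared biharmonic distance satisfies d_B²(j,k) = 2/N². -/
open Matrix Finset

/-!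
The Laplacian of the complete graph on `N` vertices is `N • P`, where `P = I - J / N` is the
orthogonal projection onto the vectors with zero sum. A symmetric `M` with `M 𝟙 = 0` also has zero
column sums, so `P M = M`, and `L M = P` forces `M = P / N`. Since `P` is idempotent,
`M² = P / N²`, and `P_jj + P_kk - 2 P_jk = 2` for `j ≠ k`.
-/

variable {n : Type*} [Fintype n]

noncomputable def centeringMatrix (n K : Type*) [Fintype n] [DecidableEq n] [DivisionRing K] :
    Matrix n n K :=
  1 - (Fintype.card n : K)⁻¹ • of fun _ _ => 1

theorem SimpleGraph.lapMatrix_top [DecidableEq n] {R : Type*} [Ring R]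
    [DecidableRel (⊤ : SimpleGraph n).Adj] :
    (⊤ : SimpleGraph n).lapMatrix R = (Fintype.card n : R) • 1 - of fun _ _ => 1 := by
  ext i j
  by_cases hij : i = j
  · subst hij
    have hdeg : (⊤ : SimpleGraph n).degree i = Fintype.card n - 1 := by
      convert complete_graph_degree i
    have hcard : 1 ≤ Fintype.card n := Fintype.card_pos_iff.mpr ⟨i⟩
    simp [lapMatrix, degMatrix, hdeg, Nat.cast_sub hcard]
  · simp [lapMatrix, degMatrix, hij]

section Semiring

variable {R : Type*} [Semiring R]

theorem of_one_mul_eq_zero {M : Matrix n n R} (hM : M.IsSymm) (hM1 : M *ᵥ (fun _ => 1) = 0) :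
    (of fun _ _ => (1 : R)) * M = 0 := by
  ext i j
  have hrow := congrFun hM1 j
  simp only [mulVec, dotProduct, mul_one, Pi.zero_apply] at hrow
  simpa [mul_apply, ← hM.apply] using hrow

theorem of_one_mul_of_one :
    (of fun (_ _ : n) => (1 : R)) * (of fun _ _ => 1) = (Fintype.card n : R) • of fun _ _ => 1 := by
  ext i j
  simp [mul_apply]

end Semiring

section Field

variable {K : Type*} [Field K] [CharZero K] [DecidableEq n]

theorem centeringMatrix_mul_self :
    centeringMatrix n K * centeringMatrix n K = centeringMatrix n K := by
  cases isEmpty_or_nonempty n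
  · exact Subsingleton.elim _ _
  have hc : (Fintype.card n : K) ≠ 0 := Nat.cast_ne_zero.mpr Fintype.card_ne_zero
  simp only [centeringMatrix, sub_mul, mul_sub, one_mul, mul_one, smul_mul_smul_comm,
    of_one_mul_of_one, smul_smul]
  rw [mul_assoc, inv_mul_cancel₀ hc, mul_one]
  abel

theorem eq_smul_centeringMatrix {M : Matrix n n K} (hM : M.IsSymm) (hM1 : M *ᵥ (fun _ => 1) = 0)
    (hLM : ((Fintype.card n : K) • 1 - of fun _ _ => 1) * M = centeringMatrix n K) :
    M = (Fintype.card n : K)⁻¹ • centeringMatrix n K := by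
  cases isEmpty_or_nonempty n
  · exact Subsingleton.elim _ _
  have hc : (Fintype.card n : K) ≠ 0 := Nat.cast_ne_zero.mpr Fintype.card_ne_zero
  rw [sub_mul, of_one_mul_eq_zero hM hM1, sub_zero, smul_mul_assoc, one_mul] at hLM
  rw [← hLM, smul_smul, inv_mul_cancel₀ hc, one_smul]

end Field

theorem biharmSq_of_mul_self_eq_smul_centeringMatrix {N : ℕ} {M : Matrix (Fin N) (Fin N) ℝ}
    {s : ℝ} (hMM : M * M = s • centeringMatrix (Fin N) ℝ) {j k : Fin N} (hjk : j ≠ k) :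
    biharmSq M j k = 2 * s := by
  simp only [biharmSq, hMM, centeringMatrix, Matrix.smul_apply, Matrix.sub_apply, one_apply_eq,
    one_apply_ne hjk, of_apply, smul_eq_mul]
  ring

theorem biharmonic_complete_graph_general (N : ℕ)
    (G : SimpleGraph (Fin N)) [DecidableRel G.Adj]
    (hG : ∀ a b : Fin N, G.Adj a b ↔ a ≠ b)
    (L M : Matrix (Fin N) (Fin N) ℝ)
    (hL : L = G.lapMatrix ℝ)
    (hMsymm : M.IsSymm)
    (hM1 : M.mulVec (fun _ => (1 : ℝ)) = 0)
    (hLM : L * M = 1 - (N : ℝ)⁻¹ • Matrix.of (fun _ _ => (1 : ℝ))) :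
    ∀ j k : Fin N, j ≠ k → biharmSq M j k = 2 / (N : ℝ) ^ 2 := by
  intro j k hjk
  obtain rfl : G = ⊤ := by ext a b; simp [hG]
  have hM : M = (N : ℝ)⁻¹ • centeringMatrix (Fin N) ℝ := by
    simpa only [Fintype.card_fin] using eq_smul_centeringMatrix hMsymm hM1
      (by simpa [centeringMatrix, hL, SimpleGraph.lapMatrix_top] using hLM)
  have hMM : M * M = ((N : ℝ)⁻¹ * (N : ℝ)⁻¹) • centeringMatrix (Fin N) ℝ := by
    rw [hM, smul_mul_smul_comm, centeringMatrix_mul_self]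
  rw [biharmSq_of_mul_self_eq_smul_centeringMatrix hMM hjk]
  ring

theorem biharmonic_complete_graph (N : ℕ) (hN : 2 ≤ N)
    (G : SimpleGraph (Fin N)) [DecidableRel G.Adj]
    (hG : ∀ a b : Fin N, G.Adj a b ↔ a ≠ b)
    (L M : Matrix (Fin N) (Fin N) ℝ)
    (hL : L = G.lapMatrix ℝ)
    (hMsymm : M.IsSymm)
    (hM1 : M.mulVec (fun _ => (1 : ℝ)) = 0)
    (hLM : L * M = 1 - (N : ℝ)⁻¹ • Matrix.of (fun _ _ => (1 : ℝ))) :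
    ∀ j k : Fin N, j ≠ k → biharmSq M j k = 2 / (N : ℝ) ^ 2 :=
  biharmonic_complete_graph_general N G hG L M hL hMsymm hM1 hLM
end

section
/- Let N ≥ 2 and let G be the star graph on vertex set {0,…,N−1}, in which vertex 0 (the hub) is adjacent to every other vertex and there are no other edges, with Laplacian matrix L. Let M be a pseudoinverse of L (M symmetric, M·𝟙 = 0, and L·M = I − (1/N)·J). Then for every leaf vertex j ∈ {1,…,N−1}, the squared biharmonic distance between the hub and j satisfies d_B²(0,j) = (N−1)/N. -/
/-! At a leaf `j` the hub is the only neighbour, so row `j` of `L M = I - J/N` reads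
`M j c - M hub c = δ j c - 1/N`. Since `M` is symmetric, `d_B²(hub, j) = ‖M (e_hub - e_j)‖²`
is the sum of the squares of these differences, `(1 - 1/N)² + (N - 1)/N² = (N - 1)/N`. -/

open Matrix Finset

theorem biharmSq_eq_sum_sq {N : ℕ} {M : Matrix (Fin N) (Fin N) ℝ} (hM : M.IsSymm)
    (j k : Fin N) : biharmSq M j k = ∑ i, (M j i - M k i) ^ 2 := by
  have hT : ∀ a b, M b a = M a b := fun a b => hM.apply a b
  simp only [biharmSq, mul_apply, hT _ j, hT _ k, sub_sq, sum_add_distrib,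
    sum_sub_distrib, mul_sum]
  ring_nf

theorem SimpleGraph.lapMatrix_mul_apply_of_neighborFinset_eq_singleton {V : Type*}
    [Fintype V] [DecidableEq V] {G : SimpleGraph V} [DecidableRel G.Adj] {j h : V}
    (hj : G.neighborFinset j = {h}) (M : Matrix V V ℝ) (c : V) :
    (G.lapMatrix ℝ * M) j c = M j c - M h c := by
  have hdeg : G.degree j = 1 := by rw [← G.card_neighborFinset_eq_degree, hj, card_singleton]
  change (G.lapMatrix ℝ *ᵥ fun i => M i c) j = _
  rw [G.lapMatrix_mulVec_apply, hj, sum_singleton, hdeg, Nat.cast_one, one_mul]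

theorem sum_sq_one_apply_sub_inv_card {ι : Type*} [Fintype ι] [DecidableEq ι] (j : ι) :
    ∑ c, ((1 : Matrix ι ι ℝ) j c - (Fintype.card ι : ℝ)⁻¹) ^ 2 = 1 - (Fintype.card ι : ℝ)⁻¹ := by
  have : Nonempty ι := ⟨j⟩
  have hcard : (Fintype.card ι : ℝ) ≠ 0 := Nat.cast_ne_zero.2 Fintype.card_ne_zero
  simp only [sub_sq, sum_add_distrib, sum_sub_distrib, one_apply, ← sum_mul,
    ite_pow, one_pow, zero_pow two_ne_zero, mul_ite, mul_one, mul_zero,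
    sum_ite_eq, mem_univ, if_true, sum_const, card_univ, nsmul_eq_mul]
  field_simp
  ring

theorem biharmonic_star_hub_leaf_general (N : ℕ)
    (G : SimpleGraph (Fin N)) [DecidableRel G.Adj]
    (hub : Fin N)
    (hG : ∀ a b : Fin N, G.Adj a b ↔ ((a = hub ∧ b ≠ hub) ∨ (b = hub ∧ a ≠ hub)))
    (L M : Matrix (Fin N) (Fin N) ℝ)
    (hL : L = G.lapMatrix ℝ)
    (hMsymm : M.IsSymm)
    (hLM : L * M = 1 - (N : ℝ)⁻¹ • Matrix.of (fun _ _ => (1 : ℝ))) :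
    ∀ j : Fin N, j ≠ hub → biharmSq M hub j = ((N : ℝ) - 1) / N := by
  intro j hj
  have hleaf : G.neighborFinset j = {hub} := by
    ext i
    simp only [SimpleGraph.mem_neighborFinset, hG, mem_singleton]
    tauto
  have hrow (c : Fin N) : M j c - M hub c = (1 : Matrix (Fin N) (Fin N) ℝ) j c - (N : ℝ)⁻¹ := by
    rw [← SimpleGraph.lapMatrix_mul_apply_of_neighborFinset_eq_singleton hleaf, ← hL, hLM]
    simp
  have hN : (N : ℝ) ≠ 0 := Nat.cast_ne_zero.2 j.pos.ne'
  calc biharmSq M hub j = ∑ c, (M j c - M hub c) ^ 2 := by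
        simp only [biharmSq_eq_sum_sq hMsymm, sub_sq_comm (M hub _)]
    _ = 1 - (N : ℝ)⁻¹ := by
        simpa only [hrow, Fintype.card_fin] using sum_sq_one_apply_sub_inv_card j
    _ = ((N : ℝ) - 1) / N := by field_simp

theorem biharmonic_star_hub_leaf (N : ℕ) (hN : 2 ≤ N)
    (G : SimpleGraph (Fin N)) [DecidableRel G.Adj]
    (hub : Fin N) (hhub : hub.val = 0)
    (hG : ∀ a b : Fin N, G.Adj a b ↔ ((a = hub ∧ b ≠ hub) ∨ (b = hub ∧ a ≠ hub)))
    (L M : Matrix (Fin N) (Fin N) ℝ)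
    (hL : L = G.lapMatrix ℝ)
    (hMsymm : M.IsSymm)
    (hM1 : M.mulVec (fun _ => (1 : ℝ)) = 0)
    (hLM : L * M = 1 - (N : ℝ)⁻¹ • Matrix.of (fun _ _ => (1 : ℝ))) :
    ∀ j : Fin N, j ≠ hub → biharmSq M hub j = ((N : ℝ) - 1) / N :=
  biharmonic_star_hub_leaf_general N G hub hG L M hL hMsymm hLM
end

section
/- Let N ≥ 3 and let G be the star graph on vertex set {0,…,N−1}, in which vertex 0 (the hub) is adjacent to every other vertex and there are no other edges, with Laplacian matrix L. Let M be a pseudoinverse of L (M symmetric, M·𝟙 = 0, and L·M = I − (1/N)·J). Then for all distinct leaf vertices j, k ∈ {1,…,N−1}, the squared biharmonic distance satisfies d_B²(j,k) = 2. -/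
open Matrix Finset

/-! Transposing `L M = I - J/N` for the symmetric matrices `L` and `M` gives `M L = I - J/N`, so `M`
inverts `L` on vectors with zero sum. For two leaves `j, k` of the star, `u = e_j - e_k` has zero sum
and `L u = u`, hence `M u = u` and `d_B²(j,k) = ‖M u‖² = ‖u‖² = 2`. -/

theorem Matrix.mulVec_mulVec_eq_self_of_mul_eq_one_sub_smul {n R : Type*} [Fintype n]
    [DecidableEq n] [CommRing R] {L M : Matrix n n R} (hL : L.IsSymm) (hM : M.IsSymm) {c : R}
    (hLM : L * M = 1 - c • of (fun _ _ => 1)) {v : n → R} (hv : ∑ i, v i = 0) :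
    M *ᵥ (L *ᵥ v) = v := by
  have hML : M * L = 1 - c • of (fun _ _ => 1) := by
    rw [← transpose_transpose (M * L), transpose_mul, hL.eq, hM.eq, hLM]
    ext i i'
    simp [one_apply, eq_comm]
  have hJv : of (fun _ _ : n => (1 : R)) *ᵥ v = 0 := by
    ext i
    simp [mulVec, dotProduct, hv]
  rw [mulVec_mulVec, hML, sub_mulVec, one_mulVec, smul_mulVec, hJv, smul_zero, sub_zero]

theorem SimpleGraph.lapMatrix_mulVec_single_of_neighborFinset_eq {V R : Type*} [Fintype V]
    [DecidableEq V] [CommRing R] (G : SimpleGraph V) [DecidableRel G.Adj] {j h : V}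
    (hj : G.neighborFinset j = {h}) :
    G.lapMatrix R *ᵥ Pi.single j 1 = Pi.single j 1 - Pi.single h 1 := by
  have hdeg : G.degree j = 1 := by rw [← card_neighborFinset_eq_degree, hj, card_singleton]
  have hadj : ∀ i, G.Adj i j ↔ i = h := fun i => by
    rw [G.adj_comm, ← mem_neighborFinset, hj, mem_singleton]
  have hne : h ≠ j := G.ne_of_adj ((hadj h).mpr rfl)
  ext i
  rw [mulVec_single_one, col_apply]
  by_cases hi : i = j
  · subst hi; simp [lapMatrix, degMatrix, hdeg, hne]
  · simp [lapMatrix, degMatrix, adjMatrix, hi, hadj, Pi.single_apply]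

theorem biharmSq_eq_dotProduct {N : ℕ} {M : Matrix (Fin N) (Fin N) ℝ} (hM : M.IsSymm) (j k : Fin N) :
    biharmSq M j k =
      M *ᵥ (Pi.single j 1 - Pi.single k 1) ⬝ᵥ M *ᵥ (Pi.single j 1 - Pi.single k 1) := by
  have hkj : (M * M) k j = (M * M) j k := by
    rw [← transpose_apply (M * M), transpose_mul, hM.eq]
  rw [dotProduct_mulVec, ← vecMul_transpose, hM.eq, vecMul_vecMul]
  simp [biharmSq, sub_vecMul, hkj]
  ring

theorem biharmonic_star_leaf_leaf_general (N : ℕ)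
    (G : SimpleGraph (Fin N)) [DecidableRel G.Adj]
    (hub : Fin N)
    (hG : ∀ a b : Fin N, G.Adj a b ↔ ((a = hub ∧ b ≠ hub) ∨ (b = hub ∧ a ≠ hub)))
    (L M : Matrix (Fin N) (Fin N) ℝ)
    (hL : L = G.lapMatrix ℝ)
    (hMsymm : M.IsSymm)
    (hLM : L * M = 1 - (N : ℝ)⁻¹ • Matrix.of (fun _ _ => (1 : ℝ))) :
    ∀ j k : Fin N, j ≠ hub → k ≠ hub → j ≠ k → biharmSq M j k = 2 := by
  intro j k hj hk hjk
  subst hL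
  have hleaf : ∀ i ≠ hub, G.neighborFinset i = {hub} := fun i hi => by
    ext b
    simp [hG, hi, eq_comm]
  set u : Fin N → ℝ := Pi.single j 1 - Pi.single k 1
  have hLu : G.lapMatrix ℝ *ᵥ u = u := by
    rw [mulVec_sub, G.lapMatrix_mulVec_single_of_neighborFinset_eq (hleaf j hj),
      G.lapMatrix_mulVec_single_of_neighborFinset_eq (hleaf k hk), sub_sub_sub_cancel_right]
  have hMu : M *ᵥ u = u := by
    have hu : ∑ i, u i = 0 := by simp [u, sum_sub_distrib]
    simpa only [hLu] using mulVec_mulVec_eq_self_of_mul_eq_one_sub_smul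
      (G.isSymm_lapMatrix ℝ) hMsymm hLM hu
  rw [biharmSq_eq_dotProduct hMsymm, hMu]
  norm_num [u, dotProduct_sub, hjk, hjk.symm]

theorem biharmonic_star_leaf_leaf (N : ℕ) (hN : 3 ≤ N)
    (G : SimpleGraph (Fin N)) [DecidableRel G.Adj]
    (hub : Fin N) (hhub : hub.val = 0)
    (hG : ∀ a b : Fin N, G.Adj a b ↔ ((a = hub ∧ b ≠ hub) ∨ (b = hub ∧ a ≠ hub)))
    (L M : Matrix (Fin N) (Fin N) ℝ)
    (hL : L = G.lapMatrix ℝ)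
    (hMsymm : M.IsSymm)
    (hM1 : M.mulVec (fun _ => (1 : ℝ)) = 0)
    (hLM : L * M = 1 - (N : ℝ)⁻¹ • Matrix.of (fun _ _ => (1 : ℝ))) :
    ∀ j k : Fin N, j ≠ hub → k ≠ hub → j ≠ k → biharmSq M j k = 2 :=
  biharmonic_star_leaf_leaf_general N G hub hG L M hL hMsymm hLM
end

section
/- For all integers N ≥ 2 and all integers l with 0 ≤ l ≤ N, one has (1/N) · Σ_{n=1}^{N−1} (1 − cos(2lnπ/N)) / (1 − cos(2nπ/N))² = l⁴/(6N) − l³/3 + l²N/6 − l²/(3N) + l/3. -/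
/-!
Write `K_l(θ) = ∑_{j<l} D_j(θ)` for the sum of the first `l` Dirichlet kernels. Telescoping
`(1 - cos θ) D_j(θ) = cos jθ - cos (j+1)θ` gives `1 - cos lθ = (1 - cos θ) K_l(θ)`, and feeding this
identity back into the cosines of `D_j` gives `K_l = l² - 2 (1 - cos θ) ∑_{j<l} ∑_{m<j} K_{m+1}`.
Hence the summand is `l² / (1 - cos θ) - 2 ∑_{j<l} ∑_{m<j} K_{m+1}(θ)`, whose second part has no
denominator. At `θ_n = 2πn/N`, orthogonality of the `N`-th roots of unity gives
`∑_n K_m(θ_n) = mN - m²` for `m ≤ N`, and the case `l = N`, where the left side vanishes, yields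
`∑_n 1 / (1 - cos θ_n) = (N² - 1) / 6`.
-/

open Finset Real

noncomputable def dirichletKernel (θ : ℝ) (j : ℕ) : ℝ :=
  1 + 2 * ∑ m ∈ range j, cos ((m + 1) * θ)

-- `l` times the Fejér kernel: `∑_{|k|<l} (l - |k|) e^{ikθ}`.
noncomputable def fejerSum (θ : ℝ) (l : ℕ) : ℝ :=
  ∑ j ∈ range l, dirichletKernel θ j

theorem one_sub_cos_mul_dirichletKernel (θ : ℝ) (j : ℕ) :
    (1 - cos θ) * dirichletKernel θ j = cos (j * θ) - cos ((j + 1) * θ) := by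
  induction j with
  | zero => simp [dirichletKernel]
  | succ j ih =>
    have h := cos_add ((j + 1) * θ) θ
    have h' := cos_sub ((j + 1) * θ) θ
    simp only [dirichletKernel, sum_range_succ, Nat.cast_succ] at ih ⊢
    rw [show ((j : ℝ) + 1) * θ - θ = j * θ by ring] at h'
    rw [show ((j : ℝ) + 1 + 1) * θ = (j + 1) * θ + θ by ring, h]
    linear_combination ih + h'

theorem one_sub_cos_nat_mul (θ : ℝ) (l : ℕ) : 1 - cos (l * θ) = (1 - cos θ) * fejerSum θ l := by
  rw [fejerSum, mul_sum]
  simp_rw [one_sub_cos_mul_dirichletKernel]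
  have := sum_range_sub' (fun j : ℕ => cos (j * θ)) l
  push_cast at this
  simp [this]

theorem dirichletKernel_eq (θ : ℝ) (j : ℕ) :
    dirichletKernel θ j = 2 * j + 1 - 2 * (1 - cos θ) * ∑ m ∈ range j, fejerSum θ (m + 1) := by
  have h : ∀ m : ℕ, cos ((m + 1) * θ) = 1 - (1 - cos θ) * fejerSum θ (m + 1) := fun m => by
    rw [← one_sub_cos_nat_mul]; push_cast; ring
  simp only [dirichletKernel, h, sum_sub_distrib, ← mul_sum, sum_const, card_range, nsmul_eq_mul]
  ring

theorem fejerSum_eq (θ : ℝ) (l : ℕ) :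
    fejerSum θ l = l ^ 2 - 2 * (1 - cos θ) * ∑ j ∈ range l, ∑ m ∈ range j, fejerSum θ (m + 1) := by
  induction l with
  | zero => simp [fejerSum]
  | succ l ih =>
    rw [fejerSum, sum_range_succ, ← fejerSum, ih, dirichletKernel_eq, sum_range_succ]
    push_cast; ring

theorem one_sub_cos_nat_mul_div_sq (θ : ℝ) (hθ : cos θ ≠ 1) (l : ℕ) :
    (1 - cos (l * θ)) / (1 - cos θ) ^ 2
      = l ^ 2 * (1 - cos θ)⁻¹ - 2 * ∑ j ∈ range l, ∑ m ∈ range j, fejerSum θ (m + 1) := by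
  have h : 1 - cos θ ≠ 0 := sub_ne_zero.mpr hθ.symm
  rw [one_sub_cos_nat_mul, fejerSum_eq]
  field_simp

theorem sum_range_cos_nat_mul (N p : ℕ) (hp : ¬ N ∣ p) :
    ∑ n ∈ range N, cos (p * (2 * n * π / N)) = 0 := by
  rcases eq_or_ne N 0 with rfl | hN
  · simp
  have hζ := Complex.isPrimitiveRoot_exp N hN
  have hζp : Complex.exp (2 * π * Complex.I / N) ^ p ≠ 1 := by rwa [Ne, hζ.pow_eq_one_iff_dvd]
  have h := congrArg Complex.re (geom_sum_eq hζp N)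
  rw [← pow_mul, mul_comm p N, pow_mul, hζ.pow_eq_one, one_pow, sub_self, zero_div,
    Complex.re_sum, Complex.zero_re] at h
  rw [← h]
  refine sum_congr rfl fun n _ => ?_
  rw [← pow_mul, ← Complex.exp_nat_mul, ← Complex.exp_ofReal_mul_I_re]
  congr 2
  push_cast
  ring

theorem sum_range_eq_add_sum_Icc {M : Type*} [AddCommMonoid M] (f : ℕ → M) {N : ℕ} (hN : N ≠ 0) :
    ∑ n ∈ range N, f n = f 0 + ∑ n ∈ Icc 1 (N - 1), f n := by
  rw [Nat.range_eq_Icc_zero_sub_one N hN, ← insert_Icc_add_one_left_eq_Icc (Nat.zero_le _),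
    sum_insert (by simp), zero_add]

theorem sum_Icc_cos_nat_mul (N p : ℕ) (hN : N ≠ 0) (hp : ¬ N ∣ p) :
    ∑ n ∈ Icc 1 (N - 1), cos (p * (2 * n * π / N)) = -1 := by
  have h := sum_range_cos_nat_mul N p hp
  rw [sum_range_eq_add_sum_Icc _ hN] at h
  simp only [CharP.cast_eq_zero, mul_zero, zero_mul, zero_div, cos_zero] at h
  linarith

theorem sum_dirichletKernel (N j : ℕ) (hj : j < N) :
    ∑ n ∈ Icc 1 (N - 1), dirichletKernel (2 * n * π / N) j = N - 1 - 2 * j := by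
  have hcos (m : ℕ) (hm : m ∈ range j) :
      ∑ n ∈ Icc 1 (N - 1), cos (((m : ℝ) + 1) * (2 * n * π / N)) = -1 := by
    have hmN : m + 1 < N := by rw [mem_range] at hm; omega
    simpa using sum_Icc_cos_nat_mul N (m + 1) (by omega) (Nat.not_dvd_of_pos_of_lt m.succ_pos hmN)
  simp only [dirichletKernel, sum_add_distrib, ← mul_sum]
  rw [sum_comm, sum_congr rfl hcos]
  simp [Nat.cast_sub (by omega : 1 ≤ N)]
  ring

theorem sum_fejerSum (N l : ℕ) (hl : l ≤ N) :
    ∑ n ∈ Icc 1 (N - 1), fejerSum (2 * n * π / N) l = l * N - l ^ 2 := by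
  induction l with
  | zero => simp [fejerSum]
  | succ l ih =>
    simp only [fejerSum, sum_range_succ, sum_add_distrib] at ih ⊢
    rw [ih (by omega), sum_dirichletKernel N l (by omega)]
    push_cast; ring

theorem sum_range_sum_range_mul_sub_sq (N l : ℕ) :
    ∑ j ∈ range l, ∑ m ∈ range j, (((m : ℝ) + 1) * N - (m + 1) ^ 2)
      = (N : ℝ) * l * ((l : ℝ) ^ 2 - 1) / 6 - (l : ℝ) ^ 2 * ((l : ℝ) ^ 2 - 1) / 12 := by
  have inner (j : ℕ) : ∑ m ∈ range j, (((m : ℝ) + 1) * N - (m + 1) ^ 2)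
      = (N : ℝ) * j * (j + 1) / 2 - (j : ℝ) * (j + 1) * (2 * j + 1) / 6 := by
    induction j with
    | zero => simp
    | succ j ih => rw [sum_range_succ, ih]; push_cast; ring
  induction l with
  | zero => simp
  | succ l ih => rw [sum_range_succ, ih, inner]; push_cast; ring

theorem sum_sum_sum_fejerSum (N l : ℕ) (hl : l ≤ N) :
    ∑ n ∈ Icc 1 (N - 1), ∑ j ∈ range l, ∑ m ∈ range j, fejerSum (2 * n * π / N) (m + 1)
      = (N : ℝ) * l * ((l : ℝ) ^ 2 - 1) / 6 - (l : ℝ) ^ 2 * ((l : ℝ) ^ 2 - 1) / 12 := by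
  rw [sum_comm, ← sum_range_sum_range_mul_sub_sq]
  refine sum_congr rfl fun j hj => ?_
  rw [sum_comm]
  refine sum_congr rfl fun m hm => ?_
  simp only [mem_range] at hj hm
  rw [sum_fejerSum N (m + 1) (by omega)]
  push_cast; ring

theorem cos_two_mul_nat_mul_pi_div_ne_one {N n : ℕ} (hn : 0 < n) (hnN : n < N) :
    cos (2 * n * π / N) ≠ 1 := by
  have hN : (0 : ℝ) < N := by exact_mod_cast hn.trans hnN
  have hlt : (n : ℝ) / N < 1 := (div_lt_one hN).mpr (by exact_mod_cast hnN)
  have hpos : 0 < (n : ℝ) / N := by positivity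
  rw [show 2 * n * π / N = 2 * π * (n / N) by ring, Ne, cos_eq_one_iff_of_lt_of_lt]
  · positivity
  · nlinarith [pi_pos]
  · nlinarith [pi_pos]

theorem sum_one_sub_cos_inv (N : ℕ) (hN : N ≠ 0) :
    ∑ n ∈ Icc 1 (N - 1), (1 - cos (2 * n * π / N))⁻¹ = ((N : ℝ) ^ 2 - 1) / 6 := by
  have hN' : (N : ℝ) ≠ 0 := by exact_mod_cast hN
  have hterm (n : ℕ) (hn : n ∈ Icc 1 (N - 1)) :
      (1 - cos (2 * n * π / N))⁻¹
        = 2 / N ^ 2 * ∑ j ∈ range N, ∑ m ∈ range j, fejerSum (2 * n * π / N) (m + 1) := by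
    rw [mem_Icc] at hn
    have h := one_sub_cos_nat_mul_div_sq _
      (cos_two_mul_nat_mul_pi_div_ne_one (N := N) hn.1 (by omega)) N
    rw [show (N : ℝ) * (2 * n * π / N) = n * (2 * π) by field_simp, cos_nat_mul_two_pi,
      sub_self, zero_div] at h
    field_simp
    linear_combination -h
  rw [sum_congr rfl hterm, ← mul_sum, sum_sum_sum_fejerSum N N le_rfl]
  field_simp
  ring

theorem cycle_trig_sum_GN (N : ℕ) (hN : 2 ≤ N) (l : ℕ) (hl : l ≤ N) :
    (1 / (N : ℝ)) * ∑ n ∈ Finset.Icc 1 (N - 1),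
        (1 - Real.cos (2 * l * n * Real.pi / N)) / (1 - Real.cos (2 * n * Real.pi / N)) ^ 2
      = (l : ℝ) ^ 4 / (6 * N) - (l : ℝ) ^ 3 / 3 + (l : ℝ) ^ 2 * N / 6
          - (l : ℝ) ^ 2 / (3 * N) + (l : ℝ) / 3 := by
  have hterm (n : ℕ) (hn : n ∈ Icc 1 (N - 1)) :
      (1 - cos (2 * l * n * π / N)) / (1 - cos (2 * n * π / N)) ^ 2
        = l ^ 2 * (1 - cos (2 * n * π / N))⁻¹
          - 2 * ∑ j ∈ range l, ∑ m ∈ range j, fejerSum (2 * n * π / N) (m + 1) := by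
    rw [mem_Icc] at hn
    rw [← one_sub_cos_nat_mul_div_sq _ (cos_two_mul_nat_mul_pi_div_ne_one hn.1 (by omega)),
      mul_div_assoc', ← mul_assoc, ← mul_assoc, mul_comm (l : ℝ) 2]
  rw [sum_congr rfl hterm, sum_sub_distrib, ← mul_sum, ← mul_sum, sum_one_sub_cos_inv N (by omega),
    sum_sum_sum_fejerSum N l hl]
  have hN' : (N : ℝ) ≠ 0 := by positivity
  field_simp
  ring
end

section
/- For all integers N ≥ 2 and all integers l with 1 ≤ l ≤ N, the real part of (1/N) · Σ_{n=1}^{N−1} (1 − e^{2ilnπ/N}) / (1 − e^{2inπ/N})² equals l²/(2N) − l/N − l/2 + 1. -/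
/-!
Write `ζ = exp (2πi / N)` and `z = ζ ^ n`. The summand is
`(1 - z ^ l) / (1 - z) ^ 2 = ∑_{k < l} z ^ k / (1 - z)`. Over the nontrivial `N`-th roots of
unity `z`, the sums `F k = ∑ z ^ k / (1 - z)` satisfy `F k - F (k + 1) = ∑ z ^ k`, which is `-1`
for `0 < k < N`, and `F 0 = (N - 1) / 2` by pairing `z` with `z⁻¹`. Hence `2 F k = 2 k - N - 1`
for `1 ≤ k ≤ N`, and twice the whole sum is `(l - 2) (l - N)`.
-/

open Finset Complex

namespace IsPrimitiveRoot

variable {K : Type*} [Field K] {N : ℕ} {ζ : K}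

theorem one_sub_pow_ne_zero (hζ : IsPrimitiveRoot ζ N) {n : ℕ} (hn : n ∈ Ico 1 N) :
    1 - ζ ^ n ≠ 0 :=
  have ⟨hn₁, hn₂⟩ := mem_Ico.1 hn
  sub_ne_zero.2 (hζ.pow_ne_one_of_pos_of_lt (Nat.one_le_iff_ne_zero.1 hn₁) hn₂).symm

theorem sum_Ico_pow_pow_eq_neg_one (hζ : IsPrimitiveRoot ζ N) (hN : 0 < N) {k : ℕ}
    (hk : ¬N ∣ k) : ∑ n ∈ Ico 1 N, (ζ ^ n) ^ k = -1 := by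
  have hζk : ζ ^ k ≠ 1 := fun h ↦ hk (hζ.pow_eq_one_iff_dvd k |>.1 h)
  have hgeom : ∑ n ∈ range N, (ζ ^ k) ^ n = 0 := by
    rw [geom_sum_eq hζk, ← pow_mul, mul_comm, pow_mul, hζ.pow_eq_one, one_pow, sub_self,
      zero_div]
  rw [sum_range_eq_add_Ico _ hN, pow_zero] at hgeom
  simp_rw [← pow_mul, mul_comm _ k, pow_mul]
  linear_combination hgeom

theorem two_mul_sum_Ico_one_div_one_sub_pow (hζ : IsPrimitiveRoot ζ N) (hN : 0 < N) :
    2 * ∑ n ∈ Ico 1 N, 1 / (1 - ζ ^ n) = N - 1 := by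
  -- pair `ζ ^ n` with `ζ ^ (N - n) = (ζ ^ n)⁻¹`, using `1 / (1 - z) + 1 / (1 - z⁻¹) = 1`
  have hreflect :
      ∑ n ∈ Ico 1 N, 1 / (1 - ζ ^ (N - n)) = ∑ n ∈ Ico 1 N, 1 / (1 - ζ ^ n) := by
    rw [sum_Ico_reflect (fun j ↦ 1 / (1 - ζ ^ j)) 1 (Nat.le_succ N)]
    simp
  have hpair : ∀ n ∈ Ico 1 N, 1 / (1 - ζ ^ n) + 1 / (1 - ζ ^ (N - n)) = 1 := by
    intro n hn
    have hNn : ζ ^ (N - n) * ζ ^ n = 1 := by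
      rw [← pow_add, Nat.sub_add_cancel (mem_Ico.1 hn).2.le, hζ.pow_eq_one]
    have h₁ := hζ.one_sub_pow_ne_zero hn
    have h₂ := hζ.one_sub_pow_ne_zero (n := N - n) (by grind)
    field_simp
    linear_combination (-1 : K) * hNn
  calc 2 * ∑ n ∈ Ico 1 N, 1 / (1 - ζ ^ n)
      = ∑ n ∈ Ico 1 N, (1 / (1 - ζ ^ n) + 1 / (1 - ζ ^ (N - n))) := by
        rw [sum_add_distrib, hreflect, two_mul]
    _ = N - 1 := by
        rw [sum_congr rfl hpair, sum_const, Nat.card_Ico, nsmul_one, Nat.cast_sub hN]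
        simp

theorem sum_Ico_pow_pow_succ_div_one_sub_pow (hζ : IsPrimitiveRoot ζ N) (k : ℕ) :
    ∑ n ∈ Ico 1 N, (ζ ^ n) ^ (k + 1) / (1 - ζ ^ n)
      = ∑ n ∈ Ico 1 N, (ζ ^ n) ^ k / (1 - ζ ^ n) - ∑ n ∈ Ico 1 N, (ζ ^ n) ^ k := by
  rw [← sum_sub_distrib]
  refine sum_congr rfl fun n hn ↦ ?_
  have := hζ.one_sub_pow_ne_zero hn
  field_simp
  ring

theorem two_mul_sum_Ico_pow_pow_div_one_sub_pow (hζ : IsPrimitiveRoot ζ N) {k : ℕ}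
    (hk₁ : 1 ≤ k) (hk₂ : k ≤ N) :
    2 * ∑ n ∈ Ico 1 N, (ζ ^ n) ^ k / (1 - ζ ^ n) = 2 * (k : K) - N - 1 := by
  induction k, hk₁ using Nat.le_induction with
  | base =>
    have hN : 0 < N := hk₂
    rw [hζ.sum_Ico_pow_pow_succ_div_one_sub_pow 0]
    simp only [pow_zero, sum_const, Nat.card_Ico, nsmul_one, Nat.cast_sub hN]
    linear_combination hζ.two_mul_sum_Ico_one_div_one_sub_pow hN
  | succ k hk ih =>
    have hNk : ¬N ∣ k := fun h ↦ by have := Nat.le_of_dvd (by omega) h; omega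
    rw [hζ.sum_Ico_pow_pow_succ_div_one_sub_pow k,
      hζ.sum_Ico_pow_pow_eq_neg_one (by omega) hNk]
    push_cast
    linear_combination ih (by omega)

theorem sum_Ico_one_sub_pow_pow_succ_div_sq (hζ : IsPrimitiveRoot ζ N) (l : ℕ) :
    ∑ n ∈ Ico 1 N, (1 - (ζ ^ n) ^ (l + 1)) / (1 - ζ ^ n) ^ 2
      = ∑ n ∈ Ico 1 N, (1 - (ζ ^ n) ^ l) / (1 - ζ ^ n) ^ 2
        + ∑ n ∈ Ico 1 N, (ζ ^ n) ^ l / (1 - ζ ^ n) := by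
  rw [← sum_add_distrib]
  refine sum_congr rfl fun n hn ↦ ?_
  have := hζ.one_sub_pow_ne_zero hn
  field_simp
  ring

theorem two_mul_sum_Ico_one_sub_pow_pow_div_sq (hζ : IsPrimitiveRoot ζ N) {l : ℕ}
    (hl₁ : 1 ≤ l) (hl₂ : l ≤ N) :
    2 * ∑ n ∈ Ico 1 N, (1 - (ζ ^ n) ^ l) / (1 - ζ ^ n) ^ 2 = ((l : K) - 2) * (l - N) := by
  induction l, hl₁ using Nat.le_induction with
  | base =>
    rw [hζ.sum_Ico_one_sub_pow_pow_succ_div_sq 0]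
    simp only [pow_zero, sub_self, zero_div, sum_const_zero, zero_add, Nat.cast_one]
    linear_combination hζ.two_mul_sum_Ico_one_div_one_sub_pow hl₂
  | succ l hl ih =>
    rw [hζ.sum_Ico_one_sub_pow_pow_succ_div_sq l, mul_add, ih (by omega),
      hζ.two_mul_sum_Ico_pow_pow_div_one_sub_pow hl (by omega)]
    push_cast
    ring

end IsPrimitiveRoot

theorem cycle_complex_sum_HN_general (N : ℕ) (l : ℕ) (hl1 : 1 ≤ l) (hl2 : l ≤ N) :
    ((1 / (N : ℂ)) * ∑ n ∈ Finset.Icc 1 (N - 1),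
        (1 - Complex.exp (2 * Complex.I * l * n * Real.pi / N))
          / (1 - Complex.exp (2 * Complex.I * n * Real.pi / N)) ^ 2).re
      = (l : ℝ) ^ 2 / (2 * N) - (l : ℝ) / N - (l : ℝ) / 2 + 1 := by
  have hN : N ≠ 0 := by omega
  set ζ := Complex.exp (2 * Real.pi * I / N)
  have hζ : IsPrimitiveRoot ζ N := Complex.isPrimitiveRoot_exp N hN
  have hpow : ∀ m : ℕ, Complex.exp (2 * I * m * Real.pi / N) = ζ ^ m := fun m ↦ by
    rw [← Complex.exp_nat_mul]
    ring_nf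
  have hpow_mul :
      ∀ n : ℕ, Complex.exp (2 * I * l * n * Real.pi / N) = (ζ ^ n) ^ l := fun n ↦ by
    rw [← pow_mul, ← hpow]
    push_cast
    ring_nf
  rw [show Icc 1 (N - 1) = Ico 1 N by ext; simp only [mem_Icc, mem_Ico]; omega]
  simp only [hpow_mul, hpow]
  have hsum := hζ.two_mul_sum_Ico_one_sub_pow_pow_div_sq hl1 hl2
  have hS : ∑ n ∈ Ico 1 N, (1 - (ζ ^ n) ^ l) / (1 - ζ ^ n) ^ 2
      = (((l - 2) * (l - N) / 2 : ℝ) : ℂ) := by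
    push_cast
    linear_combination hsum / 2
  rw [hS, ← ofReal_natCast, ← ofReal_one, ← ofReal_div, ← ofReal_mul, ofReal_re]
  field_simp
  ring

theorem cycle_complex_sum_HN (N : ℕ) (hN : 2 ≤ N) (l : ℕ) (hl1 : 1 ≤ l) (hl2 : l ≤ N) :
    ((1 / (N : ℂ)) * ∑ n ∈ Finset.Icc 1 (N - 1),
        (1 - Complex.exp (2 * Complex.I * l * n * Real.pi / N))
          / (1 - Complex.exp (2 * Complex.I * n * Real.pi / N)) ^ 2).re
      = (l : ℝ) ^ 2 / (2 * N) - (l : ℝ) / N - (l : ℝ) / 2 + 1 :=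
  cycle_complex_sum_HN_general N l hl1 hl2
end

section
/- For all integers N ≥ 2 and all integers l with 1 ≤ l ≤ 2N, the real part of (1/N) · Σ_{n=1}^{N−1} (1 − e^{ilnπ/N}) / (1 − e^{inπ/N})² equals (−4N(l−2) + 2l² − 4l + (−1)^l − 1)/(8N). -/
/-!
With `ζ = e^{iπ/N}`, a primitive `2N`-th root of unity, the summand is `(1 - wˡ)/(1 - w)²` at
`w = ζⁿ`. Since `(1 - wˡ⁺²) - 2(1 - wˡ⁺¹) + (1 - wˡ) = -wˡ(1 - w)²`, the sum `T(l)` of the real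
parts has second difference `-∑ₙ Re ζ^{nl}`, a geometric sum equal to `-1` for even and `0` for odd
`0 < l < 2N` (using `ζ^{lN} = (-1)ˡ`). On the unit circle `Re 1/(1 - w) = 1/2` and `(1 + w)/(1 - w)`
is purely imaginary, so `T(1) = (N - 1)/2` and `T(2) = 0`; the closed form has the same two initial
values and the same second difference.
-/

open Finset Complex

section UnitCircle

variable {w : ℂ}

lemma normSq_one_sub_of_norm_eq_one (hw : ‖w‖ = 1) : normSq (1 - w) = 2 * (1 - w).re := by
  have h := congrArg (· ^ 2) hw
  simp only [← normSq_eq_norm_sq, normSq_apply, one_pow] at h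
  simp only [normSq_apply, sub_re, one_re, sub_im, one_im]
  linear_combination h

lemma re_inv_one_sub_of_norm_eq_one (hw : ‖w‖ = 1) (hw1 : w ≠ 1) : ((1 - w)⁻¹).re = 1 / 2 := by
  have hre : (1 - w).re ≠ 0 := by
    intro h
    have h0 := normSq_one_sub_of_norm_eq_one hw
    rw [h, mul_zero, normSq_eq_zero, sub_eq_zero] at h0
    exact hw1 h0.symm
  rw [inv_re, normSq_one_sub_of_norm_eq_one hw]
  field_simp

lemma re_one_add_div_one_sub_of_norm_eq_one (hw : ‖w‖ = 1) : ((1 + w) / (1 - w)).re = 0 := by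
  have h := congrArg (· ^ 2) hw
  simp only [← normSq_eq_norm_sq, normSq_apply, one_pow] at h
  rw [div_re, ← add_div]
  simp only [add_re, add_im, sub_re, sub_im, one_re, one_im]
  rw [show (1 + w.re) * (1 - w.re) + (0 + w.im) * (0 - w.im) = 0 by linear_combination -h,
    zero_div]

lemma re_sum_Ico_pow_of_pow_eq_neg_one_pow (hw : ‖w‖ = 1) (hw1 : w ≠ 1) {N k : ℕ} (hN : 1 ≤ N)
    (hwN : w ^ N = (-1) ^ k) : (∑ n ∈ Ico 1 N, w ^ n).re = -(1 + (-1) ^ k) / 2 := by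
  have hsub : w - 1 ≠ 0 := sub_ne_zero.mpr hw1
  rw [geom_sum_Ico hw1 hN, hwN, pow_one]
  rcases Nat.even_or_odd k with hk | hk
  · rw [hk.neg_one_pow, hk.neg_one_pow, ← neg_sub, neg_div, div_self hsub]
    norm_num
  · rw [hk.neg_one_pow, hk.neg_one_pow,
      show (-1 - w) / (w - 1) = (1 + w) / (1 - w) by rw [← neg_div_neg_eq, neg_sub]; ring,
      re_one_add_div_one_sub_of_norm_eq_one hw]
    norm_num

end UnitCircle

lemma one_sub_pow_add_two_div_one_sub_sq {K : Type*} [Field K] {w : K} (hw1 : w ≠ 1) (l : ℕ) :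
    (1 - w ^ (l + 2)) / (1 - w) ^ 2
      = 2 * ((1 - w ^ (l + 1)) / (1 - w) ^ 2) - (1 - w ^ l) / (1 - w) ^ 2 - w ^ l := by
  have : 1 - w ≠ 0 := sub_ne_zero.mpr hw1.symm
  field_simp
  ring

lemma eq_of_second_difference_eq {G : Type*} [AddCommGroup G] {a b : ℕ → G} {m M : ℕ}
    (h₀ : a m = b m) (h₁ : a (m + 1) = b (m + 1))
    (h : ∀ l, m ≤ l → l + 2 ≤ M →
      a (l + 2) - a (l + 1) - (a (l + 1) - a l) = b (l + 2) - b (l + 1) - (b (l + 1) - b l))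
    {l : ℕ} (hml : m ≤ l) (hlM : l ≤ M) : a l = b l := by
  have key : ∀ k, m + k + 1 ≤ M → a (m + k) = b (m + k) ∧ a (m + k + 1) = b (m + k + 1) := by
    intro k
    induction k with
    | zero => exact fun _ => ⟨h₀, h₁⟩
    | succ k ih =>
      intro hk
      obtain ⟨e₀, e₁⟩ := ih (by omega)
      refine ⟨e₁, ?_⟩
      have hd := h (m + k) (by omega) (by omega)
      rw [e₀, e₁, sub_left_inj, sub_left_inj] at hd
      exact hd
  obtain ⟨k, rfl⟩ := Nat.exists_eq_add_of_le hml
  cases k with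
  | zero => exact h₀
  | succ k => exact (key k (by omega)).2

section Family

variable {ι : Type*} {s : Finset ι} {w : ι → ℂ}

lemma sum_re_one_sub_pow_one_div_one_sub_sq (hw : ∀ i ∈ s, ‖w i‖ = 1) (hw1 : ∀ i ∈ s, w i ≠ 1) :
    ∑ i ∈ s, ((1 - w i ^ 1) / (1 - w i) ^ 2).re = (#s : ℝ) / 2 := by
  rw [sum_congr rfl fun i hi => ?_, sum_const, nsmul_eq_mul, mul_one_div]
  rw [pow_one, sq, ← div_div, div_self (sub_ne_zero.mpr (hw1 i hi).symm), one_div,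
    re_inv_one_sub_of_norm_eq_one (hw i hi) (hw1 i hi)]

lemma sum_re_one_sub_pow_two_div_one_sub_sq (hw : ∀ i ∈ s, ‖w i‖ = 1) (hw1 : ∀ i ∈ s, w i ≠ 1) :
    ∑ i ∈ s, ((1 - w i ^ 2) / (1 - w i) ^ 2).re = 0 := by
  refine sum_eq_zero fun i hi => ?_
  have : 1 - w i ≠ 0 := sub_ne_zero.mpr (hw1 i hi).symm
  rw [show (1 - w i ^ 2) / (1 - w i) ^ 2 = (1 + w i) / (1 - w i) by field_simp; ring,
    re_one_add_div_one_sub_of_norm_eq_one (hw i hi)]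

lemma sum_re_one_sub_pow_div_one_sub_sq_second_difference (hw1 : ∀ i ∈ s, w i ≠ 1) (l : ℕ) :
    ∑ i ∈ s, ((1 - w i ^ (l + 2)) / (1 - w i) ^ 2).re
        - ∑ i ∈ s, ((1 - w i ^ (l + 1)) / (1 - w i) ^ 2).re
        - (∑ i ∈ s, ((1 - w i ^ (l + 1)) / (1 - w i) ^ 2).re
          - ∑ i ∈ s, ((1 - w i ^ l) / (1 - w i) ^ 2).re)
      = -∑ i ∈ s, (w i ^ l).re := by
  simp only [← sum_sub_distrib, ← sum_neg_distrib]
  refine sum_congr rfl fun i hi => ?_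
  rw [one_sub_pow_add_two_div_one_sub_sq (hw1 i hi)]
  simp only [sub_re, mul_re, re_ofNat, im_ofNat, zero_mul, sub_zero]
  ring

end Family

namespace IsPrimitiveRoot

variable {ζ : ℂ} {N : ℕ}

lemma sum_re_pow_pow (hζ : IsPrimitiveRoot ζ (2 * N)) {k : ℕ} (hk1 : 1 ≤ k) (hk2 : k < 2 * N) :
    ∑ n ∈ Icc 1 (N - 1), ((ζ ^ n) ^ k).re = -(1 + (-1) ^ k) / 2 := by
  have hN : 1 ≤ N := by omega
  have hζN : ζ ^ N = -1 := (hζ.pow (by omega) (mul_comm 2 N)).eq_neg_one_of_two_right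
  simp_rw [← pow_mul, mul_comm _ k, pow_mul]
  rw [← re_sum, show Icc 1 (N - 1) = Ico 1 N by ext; simp; omega]
  refine re_sum_Ico_pow_of_pow_eq_neg_one_pow ?_ (hζ.pow_ne_one_of_pos_of_lt (by omega) hk2) hN ?_
  · rw [norm_pow, hζ.norm'_eq_one (by omega), one_pow]
  · rw [← pow_mul, mul_comm, pow_mul, hζN]

lemma sum_re_one_sub_pow_div_one_sub_sq (hζ : IsPrimitiveRoot ζ (2 * N)) {l : ℕ} (hl1 : 1 ≤ l)
    (hl2 : l ≤ 2 * N) :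
    ∑ n ∈ Icc 1 (N - 1), ((1 - (ζ ^ n) ^ l) / (1 - ζ ^ n) ^ 2).re
      = (-4 * N * ((l : ℝ) - 2) + 2 * (l : ℝ) ^ 2 - 4 * l + (-1) ^ l - 1) / 8 := by
  have hw : ∀ n ∈ Icc 1 (N - 1), ‖ζ ^ n‖ = 1 := fun n _ ↦ by
    rw [norm_pow, hζ.norm'_eq_one (by omega), one_pow]
  have hw1 : ∀ n ∈ Icc 1 (N - 1), ζ ^ n ≠ 1 := fun n hn ↦ by
    rw [mem_Icc] at hn
    exact hζ.pow_ne_one_of_pos_of_lt (by omega) (by omega)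
  refine eq_of_second_difference_eq (a := fun l ↦ ∑ n ∈ Icc 1 (N - 1), ((1 - (ζ ^ n) ^ l) / (1 - ζ ^ n) ^ 2).re)
    (b := fun l : ℕ ↦ (-4 * N * ((l : ℝ) - 2) + 2 * (l : ℝ) ^ 2 - 4 * l + (-1) ^ l - 1) / 8)
    ?_ ?_ (fun l hl hlM ↦ ?_) hl1 hl2
  · simp only [sum_re_one_sub_pow_one_div_one_sub_sq hw hw1, Nat.card_Icc]
    rw [Nat.add_sub_cancel, Nat.cast_sub (by omega : 1 ≤ N)]
    push_cast
    ring
  · simp only [sum_re_one_sub_pow_two_div_one_sub_sq hw hw1]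
    norm_num
  · simp only [sum_re_one_sub_pow_div_one_sub_sq_second_difference hw1, hζ.sum_re_pow_pow hl (by omega)]
    push_cast
    ring

end IsPrimitiveRoot

theorem path_complex_sum_TN_general (N : ℕ) (l : ℕ) (hl1 : 1 ≤ l) (hl2 : l ≤ 2 * N) :
    ((1 / (N : ℂ)) * ∑ n ∈ Finset.Icc 1 (N - 1),
        (1 - Complex.exp (Complex.I * l * n * Real.pi / N))
          / (1 - Complex.exp (Complex.I * n * Real.pi / N)) ^ 2).re
      = (-4 * (N : ℝ) * ((l : ℝ) - 2) + 2 * (l : ℝ) ^ 2 - 4 * (l : ℝ)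
          + (-1 : ℝ) ^ l - 1) / (8 * N) := by
  have hN : (N : ℂ) ≠ 0 := by norm_cast; omega
  set ζ := exp (2 * Real.pi * I / (2 * N : ℕ))
  have hζ : IsPrimitiveRoot ζ (2 * N) := isPrimitiveRoot_exp _ (by omega)
  have hexp (m : ℕ) : exp (I * m * Real.pi / N) = ζ ^ m := by
    rw [← exp_nat_mul]
    congr 1
    push_cast
    field_simp
  have hexp_mul (n : ℕ) : exp (I * l * n * Real.pi / N) = (ζ ^ n) ^ l := by
    rw [← pow_mul, ← hexp]
    push_cast
    ring_nf
  simp_rw [hexp_mul, hexp]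
  rw [one_div_mul_eq_div, div_natCast_re, re_sum, hζ.sum_re_one_sub_pow_div_one_sub_sq hl1 hl2,
    div_div]

theorem path_complex_sum_TN (N : ℕ) (hN : 2 ≤ N) (l : ℕ) (hl1 : 1 ≤ l) (hl2 : l ≤ 2 * N) :
    ((1 / (N : ℂ)) * ∑ n ∈ Finset.Icc 1 (N - 1),
        (1 - Complex.exp (Complex.I * l * n * Real.pi / N))
          / (1 - Complex.exp (Complex.I * n * Real.pi / N)) ^ 2).re
      = (-4 * (N : ℝ) * ((l : ℝ) - 2) + 2 * (l : ℝ) ^ 2 - 4 * (l : ℝ)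
          + (-1 : ℝ) ^ l - 1) / (8 * N) :=
  path_complex_sum_TN_general N l hl1 hl2
end

section
/- For all integers N ≥ 2, one has Σ_{n=1}^{N−1} 1/sin⁴(nπ/N) = (N⁴ + 10N² − 11)/45. -/
/-!
Let `ζ` be a primitive `N`-th root of unity and `w = (1 - ζ ^ n)⁻¹`. Since
`(1 - e^{2ix})² = -4 e^{2ix} sin² x`, one has `1 / sin² (nπ/N) = 4 w (1 - w)`, so the sum is
`16 ∑ (w² - 2w³ + w⁴)` and it suffices to know the power sums `S m = ∑ₙ wₙ ^ m`, `m ≤ 4`.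
For `F_j(z) = ∑_{k<N} C(k+j, j) z ^ k` the telescoping identity
`(1 - z) F_{j+1}(z) = F_j(z) - C(N+j, j+1) z ^ N` shows that at a nontrivial `N`-th root of
unity `F_j` is a polynomial in `w` with binomial coefficients, while orthogonality of characters
gives `∑_{z^N = 1} F_j(z) = N`. Together these form a triangular linear system for `S 1, …, S 4`.
-/

open Finset

theorem Nat.cast_add_choose_succ {K : Type*} [Field K] [CharZero K] (N i : ℕ) :
    ((N + i).choose (i + 1) : K) = N.ascFactorial (i + 1) / (i + 1).factorial := by
  rw [Nat.ascFactorial_eq_factorial_mul_choose', Nat.add_sub_assoc (Nat.le_add_left 1 i),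
    Nat.add_sub_cancel, Nat.cast_mul,
    mul_div_cancel_left₀ _ (Nat.cast_ne_zero.2 (Nat.factorial_ne_zero _))]

theorem one_sub_mul_sum_range_add_choose_mul_pow {R : Type*} [CommRing R] (N j : ℕ) (z : R) :
    (1 - z) * ∑ k ∈ range N, ((k + (j + 1)).choose (j + 1) : R) * z ^ k
      = ∑ k ∈ range N, ((k + j).choose j : R) * z ^ k - ((N + j).choose (j + 1) : R) * z ^ N := by
  induction N with
  | zero => simp
  | succ N ih =>
    rw [sum_range_succ, sum_range_succ, mul_add, ih, show N + (j + 1) = N + j + 1 by omega,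
      show N + 1 + j = N + j + 1 by omega, Nat.choose_succ_succ']
    push_cast
    ring

section Field

variable {K : Type*} [Field K]

theorem sum_range_add_choose_mul_pow_of_pow_eq_one {z : K} {N : ℕ} (hzN : z ^ N = 1)
    (hz1 : z ≠ 1) (j : ℕ) :
    ∑ k ∈ range N, ((k + j).choose j : K) * z ^ k
      = -∑ i ∈ range j, ((N + i).choose (i + 1) : K) * (1 - z)⁻¹ ^ (j - i) := by
  induction j with
  | zero => simp [geom_sum_eq hz1, hzN]
  | succ j ih =>
    have hw : 1 - z ≠ 0 := sub_ne_zero.2 hz1.symm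
    have hshift : ∀ i ∈ range j, ((N + i).choose (i + 1) : K) * (1 - z)⁻¹ ^ (j + 1 - i)
        = (1 - z)⁻¹ * (((N + i).choose (i + 1) : K) * (1 - z)⁻¹ ^ (j - i)) := by
      intro i hi
      rw [Nat.sub_add_comm (mem_range.1 hi).le, pow_succ]
      ring
    rw [← inv_mul_cancel_left₀ hw (∑ k ∈ range N, _), one_sub_mul_sum_range_add_choose_mul_pow,
      hzN, ih, sum_range_succ, sum_congr rfl hshift, ← mul_sum, Nat.add_sub_cancel_left]
    ring

theorem IsPrimitiveRoot.sum_range_sum_range_add_choose_mul_pow {ζ : K} {N : ℕ}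
    (hζ : IsPrimitiveRoot ζ N) (j : ℕ) :
    ∑ n ∈ range N, ∑ k ∈ range N, ((k + j).choose j : K) * (ζ ^ n) ^ k = N := by
  rw [sum_comm, sum_eq_single 0]
  · simp
  · intro k hk hk0
    have hk1 : ζ ^ k ≠ 1 := hζ.pow_ne_one_of_pos_of_lt hk0 (mem_range.1 hk)
    simp_rw [← pow_mul, mul_comm _ k, pow_mul]
    rw [← mul_sum, geom_sum_eq hk1, ← pow_mul, mul_comm k N, pow_mul, hζ.pow_eq_one]
    simp
  · intro h0
    simp_all

theorem IsPrimitiveRoot.natCast_sub_choose_eq_neg_sum {ζ : K} {N : ℕ} (hζ : IsPrimitiveRoot ζ N)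
    (j : ℕ) :
    (N : K) - (N + j).choose (j + 1)
      = -∑ i ∈ range j, ((N + i).choose (i + 1) : K) * ∑ n ∈ Ico 1 N, (1 - ζ ^ n)⁻¹ ^ (j - i) := by
  rcases N.eq_zero_or_pos with rfl | hN
  · simp
  have hsplit := sum_range_eq_add_Ico
    (fun n ↦ ∑ k ∈ range N, ((k + j).choose j : K) * (ζ ^ n) ^ k) hN
  -- the `n = 0` term is the hockey-stick sum, read off from the telescoping identity at `z = 1`
  have hone := one_sub_mul_sum_range_add_choose_mul_pow N j (1 : K)
  simp only [sub_self, zero_mul, one_pow, mul_one] at hone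
  have hroots : ∀ n ∈ Ico 1 N, ∑ k ∈ range N, ((k + j).choose j : K) * (ζ ^ n) ^ k
      = -∑ i ∈ range j, ((N + i).choose (i + 1) : K) * (1 - ζ ^ n)⁻¹ ^ (j - i) := by
    intro n hn
    obtain ⟨hn1, hnN⟩ := mem_Ico.1 hn
    refine sum_range_add_choose_mul_pow_of_pow_eq_one ?_ (hζ.pow_ne_one_of_pos_of_lt ?_ hnN) j
    · rw [← pow_mul, mul_comm, pow_mul, hζ.pow_eq_one, one_pow]
    · omega
  simp only [hζ.sum_range_sum_range_add_choose_mul_pow, pow_zero, one_pow, mul_one,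
    sum_congr rfl hroots, sum_neg_distrib] at hsplit
  rw [sum_comm] at hsplit
  simp only [← mul_sum] at hsplit
  linear_combination hsplit - hone

theorem IsPrimitiveRoot.sum_sq_inv_one_sub_mul_one_sub_inv [CharZero K] {ζ : K} {N : ℕ}
    (hζ : IsPrimitiveRoot ζ N) (hN : N ≠ 0) :
    ∑ n ∈ Ico 1 N, ((1 - ζ ^ n)⁻¹ * (1 - (1 - ζ ^ n)⁻¹)) ^ 2
      = ((N : K) ^ 4 + 10 * N ^ 2 - 11) / 720 := by
  have hNK : (N : K) ≠ 0 := Nat.cast_ne_zero.2 hN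
  set S : ℕ → K := fun m ↦ ∑ n ∈ Ico 1 N, (1 - ζ ^ n)⁻¹ ^ m with hS
  have E : ∀ j, (N : K) - (N + j).choose (j + 1)
      = -∑ i ∈ range j, ((N + i).choose (i + 1) : K) * S (j - i) :=
    hζ.natCast_sub_choose_eq_neg_sum
  have E1 := E 1
  have E2 := E 2
  have E3 := E 3
  have E4 := E 4
  simp only [sum_range_succ, sum_range_zero, Nat.cast_add_choose_succ, Nat.ascFactorial_succ,
    Nat.ascFactorial_zero] at E1 E2 E3 E4
  push_cast at E1 E2 E3 E4
  norm_num at E1 E2 E3 E4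
  have hS1 : S 1 = (N - 1) / 2 := by
    apply mul_left_cancel₀ hNK
    linear_combination E1
  have hS2 : S 2 = (6 * N - N ^ 2 - 5) / 12 := by
    apply mul_left_cancel₀ hNK
    linear_combination E2 - (N + 1) * N / 2 * hS1
  have hS3 : S 3 = (4 * N - N ^ 2 - 3) / 8 := by
    apply mul_left_cancel₀ hNK
    linear_combination E3 - (N + 1) * N / 2 * hS2 - (N + 2) * (N + 1) * N / 6 * hS1
  have hS4 : S 4 = (N ^ 4 - 110 * N ^ 2 + 360 * N - 251) / 720 := by
    apply mul_left_cancel₀ hNK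
    linear_combination E4 - (N + 1) * N / 2 * hS3 - (N + 2) * (N + 1) * N / 6 * hS2
      - (N + 3) * (N + 2) * (N + 1) * N / 24 * hS1
  have hexpand :
      ∑ n ∈ Ico 1 N, ((1 - ζ ^ n)⁻¹ * (1 - (1 - ζ ^ n)⁻¹)) ^ 2 = S 2 - 2 * S 3 + S 4 := by
    simp only [hS, mul_sum, ← sum_sub_distrib, ← sum_add_distrib]
    exact sum_congr rfl fun n _ ↦ by ring
  rw [hexpand, hS2, hS3, hS4]
  ring

end Field

theorem Complex.inv_sin_sq_eq_inv_one_sub_exp (x : ℂ) :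
    (sin x ^ 2)⁻¹ = 4 * ((1 - exp (2 * x * I))⁻¹ * (1 - (1 - exp (2 * x * I))⁻¹)) := by
  have hsin : 2 * exp (x * I) * sin x = (1 - exp (2 * x * I)) * I := by
    rw [sin, show 2 * x * I = x * I + x * I by ring, exp_add, neg_mul, exp_neg]
    field_simp
  have hsq : (1 - exp (2 * x * I)) ^ 2 = -4 * exp (2 * x * I) * sin x ^ 2 := by
    rw [show 2 * x * I = x * I + x * I by ring, exp_add] at hsin ⊢
    linear_combination (2 * exp (x * I) * sin x + (1 - exp (x * I) * exp (x * I)) * I) * hsin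
      + (1 - exp (x * I) * exp (x * I)) ^ 2 * I_sq
  rcases eq_or_ne (1 - exp (2 * x * I)) 0 with hz | hz
  · have : sin x ^ 2 = 0 := by simpa [hz, exp_ne_zero] using hsq
    simp [hz, this]
  · have hs : sin x ≠ 0 := by
      rintro hs
      simp [hs, hz] at hsq
    field_simp
    linear_combination hsq

open Real

theorem sum_inv_sin_pow_four_cycle (N : ℕ) (hN : 2 ≤ N) :
    ∑ n ∈ Finset.Icc 1 (N - 1), 1 / Real.sin (n * Real.pi / N) ^ 4
      = ((N : ℝ) ^ 4 + 10 * (N : ℝ) ^ 2 - 11) / 45 := by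
  have hN0 : N ≠ 0 := by omega
  set ζ : ℂ := Complex.exp (2 * π * Complex.I / N)
  have hζ : IsPrimitiveRoot ζ N := Complex.isPrimitiveRoot_exp N hN0
  have hterm : ∀ n : ℕ, 1 / Complex.sin (n * π / N) ^ 4
      = 16 * ((1 - ζ ^ n)⁻¹ * (1 - (1 - ζ ^ n)⁻¹)) ^ 2 := by
    intro n
    have hexp : Complex.exp (2 * (n * π / N) * Complex.I) = ζ ^ n := by
      rw [← Complex.exp_nat_mul]
      ring_nf
    rw [one_div, show (4 : ℕ) = 2 * 2 from rfl, pow_mul, ← inv_pow,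
      Complex.inv_sin_sq_eq_inv_one_sub_exp, hexp]
    ring
  apply Complex.ofReal_injective
  push_cast
  rw [show Icc 1 (N - 1) = Ico 1 N from rfl, sum_congr rfl fun n _ ↦ hterm n, ← mul_sum,
    hζ.sum_sq_inv_one_sub_mul_one_sub_inv hN0]
  ring
end

section
/- For all integers N ≥ 2, one has Σ_{n=1}^{N−1} 1/sin⁴(nπ/(2N)) = 4(2N⁴ + 5N² − 7)/45. -/
/-!
With `c_m = cos (m π / N)`, the roots of the Chebyshev polynomial `U_{N-1}`, one has
`sin² (m π / (2N)) = (1 - c_m) / 2`, so the sum equals `4 ∑_m 1 / (1 - c_m)²`. For a split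
polynomial `P` with `P a ≠ 0`, minus the derivative of the logarithmic derivative gives
`∑_r 1 / (a - r)² = (P'(a)² - P(a) P''(a)) / P(a)²`, and `U_{N-1}(1) = N`,
`U'_{N-1}(1) = (N - 1) N (N + 1) / 3`, `U''_{N-1}(1) = (N - 2)(N - 1) N (N + 1)(N + 2) / 15`.
-/

open Finset Real

namespace Polynomial

variable {K : Type*} [Field K] {s : Multiset K} {a : K}

theorem eval_derivative_multiset_prod_X_sub_C (ha : a ∉ s) :
    (derivative (s.map fun r => X - C r).prod).eval a =
      (s.map fun r => X - C r).prod.eval a * (s.map fun r => (a - r)⁻¹).sum := by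
  induction s using Multiset.induction_on with
  | empty => simp
  | cons b s ih =>
    have hab : a - b ≠ 0 := sub_ne_zero.mpr fun h => ha (h ▸ s.mem_cons_self b)
    simp only [Multiset.map_cons, Multiset.prod_cons, Multiset.sum_cons, derivative_mul,
      derivative_sub, derivative_X, derivative_C, sub_zero, one_mul, eval_add, eval_mul,
      eval_sub, eval_X, eval_C, ih (mt Multiset.mem_cons_of_mem ha)]
    field_simp

theorem eval_derivative_derivative_multiset_prod_X_sub_C (ha : a ∉ s) :
    (derivative (derivative (s.map fun r => X - C r).prod)).eval a =
      (s.map fun r => X - C r).prod.eval a *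
        ((s.map fun r => (a - r)⁻¹).sum ^ 2 - (s.map fun r => ((a - r) ^ 2)⁻¹).sum) := by
  induction s using Multiset.induction_on with
  | empty => simp
  | cons b s ih =>
    have hab : a - b ≠ 0 := sub_ne_zero.mpr fun h => ha (h ▸ s.mem_cons_self b)
    have has : a ∉ s := mt Multiset.mem_cons_of_mem ha
    simp only [Multiset.map_cons, Multiset.prod_cons, Multiset.sum_cons, derivative_mul,
      derivative_add, derivative_sub, derivative_X, derivative_C, sub_zero, one_mul, eval_add,
      eval_mul, eval_sub, eval_X, eval_C, ih has, eval_derivative_multiset_prod_X_sub_C has]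
    field_simp
    ring

theorem sum_inv_sub_sq_roots {P : K[X]} (hP : Multiset.card P.roots = P.natDegree)
    (ha : P.eval a ≠ 0) :
    (P.roots.map fun r => ((a - r) ^ 2)⁻¹).sum =
      ((derivative P).eval a ^ 2 - P.eval a * (derivative (derivative P)).eval a) /
        P.eval a ^ 2 := by
  have hroot : a ∉ P.roots := fun h => ha (mem_roots'.mp h).2
  set Q := (P.roots.map fun r => X - C r).prod
  have hPQ : P = C P.leadingCoeff * Q := (C_leadingCoeff_mul_prod_multiset_X_sub_C hP).symm
  have h0 : P.eval a = P.leadingCoeff * Q.eval a := by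
    conv_lhs => rw [hPQ, eval_mul, eval_C]
  have h1 : (derivative P).eval a =
      P.leadingCoeff * (Q.eval a * (P.roots.map fun r => (a - r)⁻¹).sum) := by
    rw [← eval_derivative_multiset_prod_X_sub_C hroot]
    conv_lhs => rw [hPQ, derivative_C_mul, eval_mul, eval_C]
  have h2 : (derivative (derivative P)).eval a = P.leadingCoeff * (Q.eval a *
      ((P.roots.map fun r => (a - r)⁻¹).sum ^ 2 -
        (P.roots.map fun r => ((a - r) ^ 2)⁻¹).sum)) := by
    rw [← eval_derivative_derivative_multiset_prod_X_sub_C hroot]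
    conv_lhs => rw [hPQ, derivative_C_mul, derivative_C_mul, eval_mul, eval_C]
  obtain ⟨hc, hQ⟩ := mul_ne_zero_iff.mp (h0 ▸ ha)
  rw [h0, h1, h2]
  field_simp
  ring

namespace Chebyshev

theorem derivative_derivative_U_eval_one_eq_div {𝔽 : Type*} [Field 𝔽] [CharZero 𝔽] (n : ℤ) :
    (derivative (derivative (U 𝔽 n))).eval 1 =
      (n + 3) * (n + 2) * (n + 1) * n * (n - 1) / 15 := by
  have h := iterate_derivative_U_eval_one_eq_div (𝔽 := 𝔽) n 2
  simp only [Finset.prod_range_succ, Finset.prod_range_zero, Function.iterate_succ,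
    Function.iterate_zero, Function.comp_apply, id] at h
  rw [h]
  push_cast
  ring

theorem roots_U_real_eq_map (n : ℕ) :
    (U ℝ n).roots = (Multiset.range n).map fun k : ℕ => cos ((k + 1) * π / (n + 1)) := by
  rw [roots_U_real, Finset.image_val]
  exact Multiset.dedup_eq_self.mpr (roots_U_real_nodup n)

theorem card_roots_U_real (n : ℕ) : Multiset.card (U ℝ n).roots = (U ℝ n).natDegree := by
  rw [roots_U_real_eq_map, Multiset.card_map, Multiset.card_range, natDegree_U_natCast]

end Chebyshev

end Polynomial

open Polynomial Polynomial.Chebyshev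

theorem Real.one_div_sin_pow_four_eq (x : ℝ) :
    1 / sin x ^ 4 = 4 * ((1 - cos (2 * x)) ^ 2)⁻¹ := by
  rw [cos_two_mul_eq_one_sub]
  ring

theorem sum_inv_sin_pow_four_path (N : ℕ) (hN : 2 ≤ N) :
    ∑ n ∈ Finset.Icc 1 (N - 1), 1 / Real.sin (n * Real.pi / (2 * N)) ^ 4
      = 4 * (2 * (N : ℝ) ^ 4 + 5 * (N : ℝ) ^ 2 - 7) / 45 := by
  obtain ⟨n, rfl⟩ : ∃ n, N = n + 1 := ⟨N - 1, by omega⟩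
  have hU : (U ℝ n).eval 1 = n + 1 := by simp [U_eval_one]
  have hsum : ∑ m ∈ Icc 1 (n + 1 - 1), 1 / sin (m * π / (2 * ((n + 1 : ℕ) : ℝ))) ^ 4 =
      4 * ((U ℝ n).roots.map fun r => ((1 - r) ^ 2)⁻¹).sum := by
    rw [roots_U_real_eq_map, Multiset.map_map, Nat.add_sub_cancel, ← Ico_add_one_right_eq_Icc,
      ← sum_Ico_add' _ 0 n 1, ← range_eq_Ico, ← range_val, sum_map_val, mul_sum]
    refine sum_congr rfl fun k _ => ?_
    have harg :
        2 * (((k + 1 : ℕ) : ℝ) * π / (2 * ((n + 1 : ℕ) : ℝ))) = (k + 1) * π / (n + 1) := by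
      push_cast
      field_simp
    rw [one_div_sin_pow_four_eq, harg]
    rfl
  rw [hsum, sum_inv_sub_sq_roots (card_roots_U_real n) (by rw [hU]; positivity), hU,
    derivative_U_eval_one_eq_div, derivative_derivative_U_eval_one_eq_div]
  push_cast
  field_simp
  ring
end
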